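/- arXiv:2302.09571 — 9 statements merged into one kernel-verified Lean document; each statement's English description precedes it below -/
import Mathlib

section
/- Let X be a topological space, Y ⊆ X a dense subset, and (f_n) a sequence of continuous real-valued functions on X. Then (f_n) is an independent sequence on X if and only if the sequence of restrictions (f_n|_Y) is an independent sequence on Y. -/
/-- A sequence `(f n)` of real-valued functions on `Z` is *independent* if there are
reals `a < b` such that for all disjoint finite sets `P, M ⊆ ℕ` the set
`⋂_{n ∈ P} {f n < a} ∩ ⋂_{n ∈ M} {f n > b}` is nonempty. -/
def IsIndependentSeq {Z : Type*} (f : ℕ → Z → ℝ) : Prop :=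
  ∃ a b : ℝ, a < b ∧ ∀ P M : Finset ℕ, Disjoint P M →
    ((⋂ n ∈ P, {z | f n z < a}) ∩ ⋂ n ∈ M, {z | b < f n z}).Nonempty

theorem stmt9 {X : Type*} [TopologicalSpace X] (Y : Set X) (hY : Dense Y)
    (f : ℕ → X → ℝ) (hf : ∀ n, Continuous (f n)) :
    IsIndependentSeq f ↔ IsIndependentSeq fun n (y : Y) => f n y := by
  constructor
  · rintro ⟨a, b, hab, h⟩
    refine ⟨a, b, hab, fun P M hPM => ?_⟩
    set U : Set X := (⋂ n ∈ P, {z | f n z < a}) ∩ ⋂ n ∈ M, {z | b < f n z} with hU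
    have hUopen : IsOpen U := by
      apply IsOpen.inter
      · exact isOpen_biInter_finset fun n _ => isOpen_lt (hf n) continuous_const
      · exact isOpen_biInter_finset fun n _ => isOpen_lt continuous_const (hf n)
    obtain ⟨x, hxU, hxY⟩ := hY.inter_open_nonempty U hUopen (h P M hPM)
    · exact ⟨⟨x, hxY⟩, by
        simp only [hU, Set.mem_inter_iff, Set.mem_iInter, Set.mem_setOf_eq] at hxU ⊢
        exact hxU⟩
  · rintro ⟨a, b, hab, h⟩
    refine ⟨a, b, hab, fun P M hPM => ?_⟩
    obtain ⟨y, hy⟩ := h P M hPM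
    refine ⟨(y : X), ?_⟩
    simp only [Set.mem_inter_iff, Set.mem_iInter, Set.mem_setOf_eq] at hy ⊢
    exact hy
end

section
/- Let X be a compact metric space and F a uniformly bounded family of (not necessarily continuous) real-valued functions on X. Assume that F is almost continuous and that: for every sequence (f_n) in F there exist a subsequence (f_{n_m}), a countable set C ⊆ X, and a function φ : X∖C → ℝ of Baire class 1 on the subspace X∖C, such that f_{n_m}(x) → φ(x) for every x ∈ X∖C. Then F is tame: no sequence in F is independent. -/
open Filter

/-- A family `F` of real-valued functions on a topological space is
*strongly almost continuous* if every point is a point of continuity of all but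
finitely many members of `F`. -/
def StronglyAlmostContinuous {X : Type*} [TopologicalSpace X] (F : Set (X → ℝ)) : Prop :=
  ∀ x : X, {f ∈ F | ¬ ContinuousAt f x}.Finite

/-- A family `F` is *almost continuous* if every countably infinite subfamily of `F`
contains a countably infinite strongly almost continuous subfamily. -/
def AlmostContinuous {X : Type*} [TopologicalSpace X] (F : Set (X → ℝ)) : Prop :=
  ∀ F₁ ⊆ F, F₁.Countable → F₁.Infinite →
    ∃ F₂ ⊆ F₁, F₂.Countable ∧ F₂.Infinite ∧ StronglyAlmostContinuous F₂

/-- A function to `ℝ` is of *Baire class 1* if the preimage of every open set is `Fσ`. -/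
def BaireClassOne {W : Type*} [TopologicalSpace W] (g : W → ℝ) : Prop :=
  ∀ U : Set ℝ, IsOpen U → ∃ h : ℕ → Set W, (∀ n, IsClosed (h n)) ∧ g ⁻¹' U = ⋃ n, h n

/- ### Auxiliary machinery -/

/-- Encoding of the length-`n` prefix of a binary sequence as a natural number. -/
noncomputable def TamePf.preL (x : ℕ → Bool) (n : ℕ) : ℕ :=
  Encodable.encode (List.ofFn (fun i : Fin n => x i))

lemma TamePf.preL_inj {x y : ℕ → Bool} {n k : ℕ} (h : TamePf.preL x n = TamePf.preL y k) :
    n = k ∧ ∀ i, i < n → x i = y i := by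
  have h' := Encodable.encode_injective h
  have hn : n = k := by simpa using congrArg List.length h'
  subst hn
  refine ⟨rfl, fun i hi => ?_⟩
  have := List.ofFn_injective h'
  exact congrFun this ⟨i, hi⟩

/-- The pattern associated to a binary sequence: `true` exactly on encodings of prefixes. -/
noncomputable def TamePf.sigx (x : ℕ → Bool) (m : ℕ) : Bool :=
  @decide (∃ n, TamePf.preL x n = m) (Classical.propDecidable _)

lemma TamePf.sigx_iff {x : ℕ → Bool} {m : ℕ} :
    TamePf.sigx x m = true ↔ ∃ n, TamePf.preL x n = m := by
  simp [TamePf.sigx]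

lemma TamePf.inj_unbdd (g : ℕ → ℕ) (hg : Function.Injective g) (N : ℕ) : ∃ n, N ≤ g n := by
  by_contra hc
  push_neg at hc
  exact (Set.infinite_range_of_injective hg) ((Set.finite_Iio N).subset
    (fun x ⟨n, hn⟩ => hn ▸ (hc n : g n < N)))

lemma TamePf.preL_injective (x : ℕ → Bool) : Function.Injective (TamePf.preL x) :=
  fun _ _ h => (TamePf.preL_inj h).1

lemma TamePf.sigx_true_unbdd (x : ℕ → Bool) (N : ℕ) :
    ∃ m, N ≤ m ∧ TamePf.sigx x m = true := by
  obtain ⟨n, hn⟩ := TamePf.inj_unbdd _ (TamePf.preL_injective x) N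
  exact ⟨TamePf.preL x n, hn, TamePf.sigx_iff.2 ⟨n, rfl⟩⟩

lemma TamePf.sigx_false_unbdd (x : ℕ → Bool) (N : ℕ) :
    ∃ m, N ≤ m ∧ TamePf.sigx x m = false := by
  set y : ℕ → Bool := fun i => if i = 0 then !(x 0) else true with hy
  obtain ⟨n, hn⟩ := TamePf.inj_unbdd (fun n => TamePf.preL y (n+1))
    (fun n k h => by simpa using (TamePf.preL_inj h).1) N
  refine ⟨TamePf.preL y (n+1), hn, ?_⟩
  rw [Bool.eq_false_iff]
  intro ht
  obtain ⟨k, hk⟩ := TamePf.sigx_iff.1 ht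
  obtain ⟨hk1, hk2⟩ := TamePf.preL_inj hk
  have := hk2 0 (by omega)
  simp [hy] at this

lemma TamePf.sigx_diff_unbdd {x y : ℕ → Bool} {d : ℕ} (hd : x d ≠ y d) (N : ℕ) :
    ∃ m, N ≤ m ∧ TamePf.sigx x m = true ∧ TamePf.sigx y m = false := by
  obtain ⟨n, hn⟩ := TamePf.inj_unbdd (fun n => TamePf.preL x (n + d + 1))
    (fun n k h => by simpa using (TamePf.preL_inj h).1) N
  refine ⟨TamePf.preL x (n + d + 1), hn, TamePf.sigx_iff.2 ⟨_, rfl⟩, ?_⟩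
  rw [Bool.eq_false_iff]
  intro ht
  obtain ⟨k, hk⟩ := TamePf.sigx_iff.1 ht
  obtain ⟨hk1, hk2⟩ := TamePf.preL_inj hk
  exact hd ((hk2 d (by omega)).symm)

lemma TamePf.uncount : ¬ Countable (ℕ → Bool) := by
  intro h
  have h2 : Countable (Set ℕ) :=
    Countable.of_equiv _ (Equiv.arrowCongr (Equiv.refl ℕ) Equiv.propEquivBool).symm
  obtain ⟨f, hf⟩ := Countable.exists_injective_nat (Set ℕ)
  exact Function.cantor_injective f hf

/-- The key combinatorial lemma: an independent sequence on a compact metric space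
whose members are, at each point, almost all continuous there, cannot converge
pointwise off a countable set. -/
lemma TamePf.key {X : Type*} [MetricSpace X] [CompactSpace X]
    (h : ℕ → X → ℝ) (a b : ℝ) (hab : a < b)
    (hind : ∀ P M : Finset ℕ, Disjoint P M →
      ((⋂ n ∈ P, {z | h n z < a}) ∩ ⋂ n ∈ M, {z | b < h n z}).Nonempty)
    (hsac : ∀ x : X, {n | ¬ ContinuousAt (h n) x}.Finite)
    (C : Set X) (hC : C.Countable)
    (hcv : ∀ x : X, x ∉ C → ∃ L, Tendsto (fun m => h m x) atTop (nhds L)) : False := by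
  classical
  -- Step A : for each pattern σ produce a point realizing it at continuity indices
  have main : ∀ σ : ℕ → Bool, ∃ z : X, ∀ m, ContinuousAt (h m) z →
      (σ m = false → h m z ≤ a) ∧ (σ m = true → b ≤ h m z) := by
    intro σ
    set P : ℕ → Finset ℕ := fun k => (Finset.range (k+1)).filter (fun m => σ m = false) with hP
    set M : ℕ → Finset ℕ := fun k => (Finset.range (k+1)).filter (fun m => σ m = true) with hM
    have hdisj : ∀ k, Disjoint (P k) (M k) := by
      intro k
      rw [Finset.disjoint_left]
      intro m hm hm'
      simp [hP, hM] at hm hm'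
      simp [hm.2] at hm'
    choose w hw using fun k => hind (P k) (M k) (hdisj k)
    obtain ⟨z, -, ψ, hψ, hlim⟩ := isCompact_univ.tendsto_subseq (fun n => Set.mem_univ (w n))
    refine ⟨z, fun m hcont => ?_⟩
    have htend : Tendsto (fun j => h m (w (ψ j))) atTop (nhds (h m z)) :=
      (hcont.tendsto).comp hlim
    constructor
    · intro hσ
      refine le_of_tendsto htend ?_
      filter_upwards [eventually_ge_atTop m] with j hj
      have hmem : m ∈ P (ψ j) := by
        simp only [hP, Finset.mem_filter, Finset.mem_range]
        exact ⟨lt_of_le_of_lt (hj.trans (hψ.le_apply)) (Nat.lt_succ_self _), hσ⟩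
      have := (hw (ψ j)).1
      rw [Set.mem_iInter₂] at this
      exact le_of_lt (this m hmem)
    · intro hσ
      refine ge_of_tendsto htend ?_
      filter_upwards [eventually_ge_atTop m] with j hj
      have hmem : m ∈ M (ψ j) := by
        simp only [hM, Finset.mem_filter, Finset.mem_range]
        exact ⟨lt_of_le_of_lt (hj.trans (hψ.le_apply)) (Nat.lt_succ_self _), hσ⟩
      have := (hw (ψ j)).2
      rw [Set.mem_iInter₂] at this
      exact le_of_lt (this m hmem)
  choose zpt hzpt using main
  -- bound on discontinuity indices
  have hN : ∀ σ : ℕ → Bool, ∃ N, ∀ m, N ≤ m →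
      (σ m = false → h m (zpt σ) ≤ a) ∧ (σ m = true → b ≤ h m (zpt σ)) := by
    intro σ
    obtain ⟨N, hNb⟩ := (hsac (zpt σ)).bddAbove
    refine ⟨N+1, fun m hm => hzpt σ m ?_⟩
    by_contra hc
    have := hNb hc
    omega
  choose Nb hNb using hN
  -- Step B : patterns with infinitely many of each value give points in C
  have memC : ∀ σ : ℕ → Bool, (∀ N, ∃ m, N ≤ m ∧ σ m = false) →
      (∀ N, ∃ m, N ≤ m ∧ σ m = true) → zpt σ ∈ C := by
    intro σ hfa hta
    by_contra hzC
    obtain ⟨L, hL⟩ := hcv _ hzC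
    have hLa : L ≤ a := by
      refine le_of_tendsto_of_frequently hL (frequently_atTop.2 fun N => ?_)
      obtain ⟨m, hm1, hm2⟩ := hfa (max N (Nb σ))
      exact ⟨m, le_trans (le_max_left _ _) hm1,
        (hNb σ m (le_trans (le_max_right _ _) hm1)).1 hm2⟩
    have hLb : b ≤ L := by
      refine ge_of_tendsto_of_frequently hL (frequently_atTop.2 fun N => ?_)
      obtain ⟨m, hm1, hm2⟩ := hta (max N (Nb σ))
      exact ⟨m, le_trans (le_max_left _ _) hm1,
        (hNb σ m (le_trans (le_max_right _ _) hm1)).2 hm2⟩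
    linarith
  -- Step C : patterns differing infinitely often give distinct points
  have hdiff : ∀ σ τ : ℕ → Bool, (∀ N, ∃ m, N ≤ m ∧ σ m = true ∧ τ m = false) →
      zpt σ ≠ zpt τ := by
    intro σ τ hd heq
    obtain ⟨m, hm1, hm2, hm3⟩ := hd (max (Nb σ) (Nb τ))
    have h1 : b ≤ h m (zpt σ) := (hNb σ m (le_trans (le_max_left _ _) hm1)).2 hm2
    have h2 : h m (zpt τ) ≤ a := (hNb τ m (le_trans (le_max_right _ _) hm1)).1 hm3
    rw [heq] at h1
    linarith
  -- Step D : uncountably many pairwise-distinct such points, all inside countable C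
  have hCsub : Countable ↥C := hC.to_subtype
  have hZ : ∀ x : ℕ → Bool, zpt (TamePf.sigx x) ∈ C := fun x =>
    memC _ (TamePf.sigx_false_unbdd x) (TamePf.sigx_true_unbdd x)
  have hinj : Function.Injective (fun x : ℕ → Bool => (⟨zpt (TamePf.sigx x), hZ x⟩ : ↥C)) := by
    intro x y hxy
    by_contra hne
    obtain ⟨d, hd⟩ := Function.ne_iff.1 hne
    have hval : zpt (TamePf.sigx x) = zpt (TamePf.sigx y) := congrArg Subtype.val hxy
    exact hdiff _ _ (fun N => TamePf.sigx_diff_unbdd hd N) hval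
  exact TamePf.uncount (Function.Injective.countable hinj)

/-- Composing with an injective index map preserves the independence property. -/
lemma TamePf.ind_comp {X : Type*} (f : ℕ → X → ℝ) (a b : ℝ)
    (hind : ∀ P M : Finset ℕ, Disjoint P M →
      ((⋂ n ∈ P, {z | f n z < a}) ∩ ⋂ n ∈ M, {z | b < f n z}).Nonempty)
    (e : ℕ → ℕ) (he : Function.Injective e) :
    ∀ P M : Finset ℕ, Disjoint P M →
      ((⋂ n ∈ P, {z | f (e n) z < a}) ∩ ⋂ n ∈ M, {z | b < f (e n) z}).Nonempty := by
  classical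
  intro P M hPM
  obtain ⟨z, hz1, hz2⟩ := hind (P.image e) (M.image e)
    ((Finset.disjoint_image he).2 hPM)
  rw [Set.mem_iInter₂] at hz1 hz2
  refine ⟨z, ?_, ?_⟩ <;> rw [Set.mem_iInter₂] <;> intro n hn
  · exact hz1 (e n) (Finset.mem_image_of_mem e hn)
  · exact hz2 (e n) (Finset.mem_image_of_mem e hn)

theorem stmt10 {X : Type*} [MetricSpace X] [CompactSpace X]
    (F : Set (X → ℝ)) (hFbdd : ∃ C : ℝ, ∀ f ∈ F, ∀ x : X, |f x| ≤ C)
    (hAC : AlmostContinuous F)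
    -- (*): every sequence in `F` has a subsequence converging, off a countable set `C`,
    -- to a function of Baire class 1 on the subspace `X ∖ C`
    (hconv : ∀ f : ℕ → X → ℝ, (∀ n, f n ∈ F) →
      ∃ (φ : ℕ → ℕ) (C : Set X), StrictMono φ ∧ C.Countable ∧
        ∃ g : (Cᶜ : Set X) → ℝ, BaireClassOne g ∧
          ∀ x : (Cᶜ : Set X), Tendsto (fun m => f (φ m) x) atTop (nhds (g x))) :
    -- then `F` is tame: no sequence in `F` is independent
    ¬ ∃ f : ℕ → X → ℝ, (∀ n, f n ∈ F) ∧ IsIndependentSeq f := by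
  classical
  rintro ⟨f, hfF, a, b, hab, hind⟩
  -- the `f n` are pairwise distinct
  have hfinj : Function.Injective f := by
    intro n m hnm
    by_contra hne
    obtain ⟨z, hz1, hz2⟩ := hind {n} {m} (Finset.disjoint_singleton.2 hne)
    rw [Set.mem_iInter₂] at hz1 hz2
    have h1 := hz1 n (Finset.mem_singleton_self n)
    have h2 := hz2 m (Finset.mem_singleton_self m)
    rw [hnm] at h1
    exact absurd rfl (ne_of_gt (lt_trans (lt_trans h1 hab) h2)).symm
  -- extract a strongly almost continuous subfamily
  obtain ⟨F₂, hF₂sub, hF₂c, hF₂inf, hF₂sac⟩ := hAC (Set.range f)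
    (Set.range_subset_iff.2 hfF) (Set.countable_range f)
    (Set.infinite_range_of_injective hfinj)
  set S : Set ℕ := f ⁻¹' F₂ with hS
  have hF₂img : F₂ ⊆ f '' S := by
    intro g hg
    obtain ⟨n, rfl⟩ := hF₂sub hg
    exact ⟨n, hg, rfl⟩
  have hSinf : S.Infinite := by
    intro hfin
    exact hF₂inf ((hfin.image f).subset hF₂img)
  -- enumerate S monotonically
  set e : ℕ → ℕ := Nat.nth (· ∈ S) with he
  have heSM : StrictMono e := Nat.nth_strictMono hSinf
  have heS : ∀ k, e k ∈ S := fun k => Nat.nth_mem_of_infinite hSinf k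
  set f₁ : ℕ → X → ℝ := fun k => f (e k) with hf₁
  have hf₁F : ∀ k, f₁ k ∈ F := fun k => hfF (e k)
  -- apply the convergence hypothesis to the subsequence
  obtain ⟨φ, C, hφ, hCc, g, -, hg⟩ := hconv f₁ hf₁F
  -- the final sequence
  set h : ℕ → X → ℝ := fun m => f (e (φ m)) with hh
  have heφinj : Function.Injective (e ∘ φ) :=
    heSM.injective.comp hφ.injective
  refine TamePf.key h a b hab (TamePf.ind_comp f a b hind (e ∘ φ) heφinj) ?_ C hCc ?_
  · -- strong almost continuity in index form
    intro x
    have hfin := hF₂sac x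
    have hsub : {m | ¬ ContinuousAt (h m) x} ⊆
        (fun m => f (e (φ m))) ⁻¹' {g ∈ F₂ | ¬ ContinuousAt g x} := by
      intro m hm
      exact ⟨heS (φ m), hm⟩
    refine Set.Finite.subset (Set.Finite.preimage ?_ hfin) hsub
    exact Set.injOn_of_injective (hfinj.comp heφinj)
  · intro x hx
    exact ⟨g ⟨x, hx⟩, hg ⟨x, hx⟩⟩
end

section
/- Let X be a compact metric space and F a uniformly bounded family of (not necessarily continuous) real-valued functions on X. Assume that F is almost continuous and that every function in the closure of F in ℝ^X with the topology of pointwise convergence is of Baire class 1 on X. Then F is tame: no sequence in F is independent. -/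
open Set Filter Topology

/-- There is a continuum-sized independent family of subsets of ℕ:
all finite boolean combinations are infinite. -/
theorem exists_indep_family : ∃ A : ℝ → Set ℕ, ∀ P M : Set ℝ, P.Finite → M.Finite →
    Disjoint P M → ((⋂ x ∈ P, A x) ∩ ⋂ y ∈ M, (A y)ᶜ).Infinite := by
  classical
  set β := (Finset ℚ × Finset (Finset ℚ)) × ℕ with hβ
  haveI : Encodable β := by infer_instance
  haveI : Infinite β := by infer_instance
  haveI : Denumerable β := Denumerable.ofEncodableOfInfinite β
  let e : β ≃ ℕ := Denumerable.eqv β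
  let A₀ : ℝ → Set β := fun x => {p | p.1.1.filter (fun q : ℚ => (q:ℝ) < x) ∈ p.1.2}
  refine ⟨fun x => e '' A₀ x, ?_⟩
  intro P M hP hM hPM
  -- reduce to the base family
  have himg : ((⋂ x ∈ P, e '' A₀ x) ∩ ⋂ y ∈ M, (e '' A₀ y)ᶜ)
      = e '' ((⋂ x ∈ P, A₀ x) ∩ ⋂ y ∈ M, (A₀ y)ᶜ) := by
    rw [Set.image_inter e.injective]
    congr 1
    · rw [Set.image_iInter e.bijective]
      exact iInter_congr fun x => by rw [Set.image_iInter e.bijective]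
    · rw [Set.image_iInter e.bijective]
      refine iInter_congr fun y => ?_
      rw [Set.image_iInter e.bijective]
      exact iInter_congr fun _ => (Set.image_compl_eq e.bijective).symm
  rw [himg]
  refine Set.Infinite.image e.injective.injOn ?_
  -- find one base point (F, 𝔖)
  -- rationals strictly between pairs
  have hq : ∀ x y : ℝ, x < y → ∃ q : ℚ, x < (q:ℝ) ∧ (q:ℝ) < y := fun x y h => by
    obtain ⟨q, h1, h2⟩ := exists_rat_btwn h; exact ⟨q, h1, h2⟩
  let qf : ℝ → ℝ → ℚ := fun x y =>
    if h : x < y then (hq x y h).choose else if h' : y < x then (hq y x h').choose else 0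
  have hqf1 : ∀ x y, x < y → x < (qf x y : ℝ) ∧ ((qf x y : ℝ)) < y := by
    intro x y h; simp only [qf, dif_pos h]; exact (hq x y h).choose_spec
  have hqf2 : ∀ x y, y < x → y < (qf x y : ℝ) ∧ ((qf x y : ℝ)) < x := by
    intro x y h
    have h2 : ¬ x < y := not_lt.2 h.le
    simp only [qf, dif_neg h2, dif_pos h]; exact (hq y x h).choose_spec
  have hQfin : ((fun p : ℝ × ℝ => qf p.1 p.2) '' (P ×ˢ M)).Finite :=
    (hP.prod hM).image _
  let Fq : Finset ℚ := hQfin.toFinset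
  let cut : ℝ → Finset ℚ := fun x => Fq.filter (fun q => (q:ℝ) < x)
  let 𝔖 : Finset (Finset ℚ) := hP.toFinset.image cut
  have hw : ((Fq, 𝔖), 0) ∈ (⋂ x ∈ P, A₀ x) ∩ ⋂ y ∈ M, (A₀ y)ᶜ := by
    constructor
    · refine Set.mem_iInter₂.2 fun x hx => ?_
      show Fq.filter (fun q : ℚ => (q:ℝ) < x) ∈ 𝔖
      exact Finset.mem_image.2 ⟨x, hP.mem_toFinset.2 hx, rfl⟩
    · refine Set.mem_iInter₂.2 fun y hy => ?_
      intro hmem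
      have hmem' : Fq.filter (fun q : ℚ => (q:ℝ) < y) ∈ 𝔖 := hmem
      obtain ⟨x, hx, heq⟩ := Finset.mem_image.1 hmem'
      rw [hP.mem_toFinset] at hx
      have hxy : x ≠ y := fun h => Set.disjoint_left.1 hPM hx (h ▸ hy)
      have hqF : qf x y ∈ Fq := hQfin.mem_toFinset.2 ⟨(x, y), Set.mk_mem_prod hx hy, rfl⟩
      rcases lt_or_gt_of_ne hxy with hlt | hgt
      · obtain ⟨h1, h2⟩ := hqf1 x y hlt
        have : qf x y ∈ Finset.filter (fun q : ℚ => (q:ℝ) < y) Fq := Finset.mem_filter.2 ⟨hqF, h2⟩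
        rw [← heq] at this
        exact absurd (Finset.mem_filter.1 this).2 (not_lt.2 h1.le)
      · obtain ⟨h1, h2⟩ := hqf2 x y hgt
        have : qf x y ∈ cut x := Finset.mem_filter.2 ⟨hqF, h2⟩
        rw [show cut x = Finset.filter (fun q : ℚ => (q:ℝ) < y) Fq from heq] at this
        exact absurd (Finset.mem_filter.1 this).2 (not_lt.2 h1.le)
  -- blow up along the ℕ coordinate
  refine Set.infinite_of_injective_forall_mem
    (f := fun n : ℕ => (((Fq, 𝔖) : Finset ℚ × Finset (Finset ℚ)), n)) ?_ ?_
  · intro n m h; exact congrArg Prod.snd h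
  · intro n
    constructor
    · refine Set.mem_iInter₂.2 fun x hx => ?_
      exact Set.mem_iInter₂.1 hw.1 x hx
    · refine Set.mem_iInter₂.2 fun y hy => ?_
      exact Set.mem_iInter₂.1 hw.2 y hy

theorem exists_free_ultra {𝒜 : Set (Set ℕ)}
    (h : ∀ t ⊆ 𝒜, t.Finite → (⋂₀ t).Infinite) :
    ∃ U : Ultrafilter ℕ, ((U : Filter ℕ) ≤ Filter.cofinite) ∧ ∀ s ∈ 𝒜, s ∈ (U : Filter ℕ) := by
  classical
  set S : Set (Set ℕ) := 𝒜 ∪ {s | sᶜ.Finite} with hS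
  have hne : (Filter.generate S).NeBot := by
    rw [Filter.generate_neBot_iff]
    intro t hts htf
    set t₁ : Set (Set ℕ) := t ∩ 𝒜 with ht₁
    set t₂ : Set (Set ℕ) := t \ 𝒜 with ht₂
    have h1 : (⋂₀ t₁).Infinite := h t₁ inter_subset_right (htf.subset inter_subset_left)
    have hK : (⋃ s ∈ t₂, sᶜ).Finite := by
      refine Set.Finite.biUnion (htf.subset diff_subset) ?_
      intro s hs
      rcases hts hs.1 with h' | h'
      · exact absurd h' hs.2
      · exact h'
    obtain ⟨z, hz1, hz2⟩ := (h1.diff hK).nonempty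
    refine ⟨z, ?_⟩
    intro s hs
    by_cases hsA : s ∈ 𝒜
    · exact hz1 s ⟨hs, hsA⟩
    · by_contra hzs
      exact hz2 (Set.mem_biUnion ⟨hs, hsA⟩ hzs)
  obtain ⟨U, hU⟩ := @Ultrafilter.exists_le ℕ (Filter.generate S) hne
  refine ⟨U, ?_, ?_⟩
  · intro s hs
    exact hU (Filter.mem_generate_of_mem (Or.inr (Filter.mem_cofinite.1 hs)))
  · intro s hs
    exact hU (Filter.mem_generate_of_mem (Or.inl hs))

theorem stmt11 {X : Type*} [MetricSpace X] [CompactSpace X]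
    (F : Set (X → ℝ)) (hFbdd : ∃ C : ℝ, ∀ f ∈ F, ∀ x : X, |f x| ≤ C)
    (hAC : AlmostContinuous F)
    -- every function in the pointwise closure of `F` in `ℝ^X` is of Baire class 1 on `X`
    (hB1 : ∀ g ∈ closure F, BaireClassOne g) :
    -- then `F` is tame: no sequence in `F` is independent
    ¬ ∃ f : ℕ → X → ℝ, (∀ n, f n ∈ F) ∧ IsIndependentSeq f := by
  classical
  rintro ⟨f, hf, a, b, hab, hind⟩
  obtain ⟨C, hC⟩ := hFbdd
  -- X is nonempty
  obtain ⟨z₀, -⟩ := hind ∅ ∅ (by simp)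
  haveI : Nonempty X := ⟨z₀⟩
  -- f is injective
  have hinj : Function.Injective f := by
    intro n m hnm
    by_contra hne
    obtain ⟨z, hz⟩ := hind {n} {m} (Finset.disjoint_singleton.2 hne)
    simp only [Finset.mem_singleton, Set.mem_inter_iff, Set.mem_iInter, Set.mem_setOf_eq] at hz
    have h1 := hz.1 n rfl
    have h2 := hz.2 m rfl
    rw [hnm] at h1
    exact absurd (h1.trans (hab.trans h2)) (lt_irrefl _)
  -- extract a strongly almost continuous subfamily
  obtain ⟨F₂, hF₂₁, -, hF₂inf, hF₂sac⟩ :=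
    hAC (Set.range f) (Set.range_subset_iff.2 hf) (Set.countable_range f)
      (Set.infinite_range_of_injective hinj)
  let em : ℕ ↪ F₂ := hF₂inf.natEmbedding F₂
  let g : ℕ → X → ℝ := fun k => (em k : X → ℝ)
  have hgmem : ∀ k, g k ∈ F₂ := fun k => (em k).2
  have hginj : Function.Injective g := fun k l h => em.injective (Subtype.ext h)
  have hgF : ∀ k, g k ∈ F := fun k => Set.range_subset_iff.2 hf (hF₂₁ (hgmem k))
  -- g is still independent
  have hgind : ∀ P M : Finset ℕ, Disjoint P M →
      ((⋂ k ∈ P, {z | g k z < a}) ∩ ⋂ k ∈ M, {z | b < g k z}).Nonempty := by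
    intro P M hPM
    choose e he using fun k => hF₂₁ (hgmem k)
    have einj : Function.Injective e := fun k l h => hginj (by rw [← he, ← he, h])
    obtain ⟨z, hz1, hz2⟩ := hind (P.image e) (M.image e) ((Finset.disjoint_image einj).2 hPM)
    refine ⟨z, ?_, ?_⟩
    · refine Set.mem_iInter₂.2 fun k hk => ?_
      have := Set.mem_iInter₂.1 hz1 (e k) (Finset.mem_image_of_mem e hk)
      simpa [he k] using this
    · refine Set.mem_iInter₂.2 fun k hk => ?_
      have := Set.mem_iInter₂.1 hz2 (e k) (Finset.mem_image_of_mem e hk)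
      simpa [he k] using this
  -- realization of infinite patterns at a point
  have hpt : ∀ A : Set ℕ, ∃ x : X, ∃ E : Set ℕ, E.Finite ∧
      ∀ k ∉ E, (k ∈ A → g k x ≤ a) ∧ (k ∉ A → b ≤ g k x) := by
    intro A
    have hdisj : ∀ m : ℕ, Disjoint ((Finset.range m).filter (fun k => k ∈ A))
        ((Finset.range m).filter (fun k => k ∉ A)) := by
      intro m
      rw [Finset.disjoint_left]
      intro k hk1 hk2
      exact (Finset.mem_filter.1 hk2).2 (Finset.mem_filter.1 hk1).2
    choose z hz1 hz2 using fun m => hgind _ _ (hdisj m)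
    have hz1' : ∀ m k, k < m → k ∈ A → g k (z m) < a := by
      intro m k hkm hkA
      exact Set.mem_iInter₂.1 (hz1 m) k (Finset.mem_filter.2 ⟨Finset.mem_range.2 hkm, hkA⟩)
    have hz2' : ∀ m k, k < m → k ∉ A → b < g k (z m) := by
      intro m k hkm hkA
      exact Set.mem_iInter₂.1 (hz2 m) k (Finset.mem_filter.2 ⟨Finset.mem_range.2 hkm, hkA⟩)
    obtain ⟨x, -, φ, hφ, hlim⟩ := isCompact_univ.tendsto_subseq (fun m => Set.mem_univ (z m))
    refine ⟨x, {k | ¬ ContinuousAt (g k) x}, ?_, ?_⟩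
    · have heq : {k | ¬ ContinuousAt (g k) x} = g ⁻¹' {h ∈ F₂ | ¬ ContinuousAt h x} := by
        ext k
        simp only [Set.mem_setOf_eq, Set.mem_preimage]
        exact ⟨fun h => ⟨hgmem k, h⟩, fun h => h.2⟩
      rw [heq]
      exact Set.Finite.preimage (hginj.injOn) (hF₂sac x)
    · intro k hk
      have hcont : ContinuousAt (g k) x := not_not.1 hk
      have htend : Filter.Tendsto (fun j => g k (z (φ j))) Filter.atTop (𝓝 (g k x)) :=
        hcont.tendsto.comp hlim
      constructor
      · intro hkA
        refine le_of_tendsto htend ?_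
        refine Filter.eventually_atTop.2 ⟨k + 1, fun j hj => ?_⟩
        exact (hz1' (φ j) k (lt_of_lt_of_le (Nat.lt_succ_self k) (hj.trans (hφ.le_apply))) hkA).le
      · intro hkA
        refine ge_of_tendsto htend ?_
        refine Filter.eventually_atTop.2 ⟨k + 1, fun j hj => ?_⟩
        exact (hz2' (φ j) k (lt_of_lt_of_le (Nat.lt_succ_self k) (hj.trans (hφ.le_apply))) hkA).le
  choose xpt Ept hEfin hspec using hpt
  -- ultrafilter limits
  have hbd : ∀ k x, g k x ∈ Set.Icc (-C) C := by
    intro k x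
    have := abs_le.1 (hC _ (hgF k) x)
    exact ⟨this.1, this.2⟩
  have key : ∀ (U : Ultrafilter ℕ) (x : X), ∃ c : ℝ,
      Filter.Tendsto (fun k => g k x) (U : Filter ℕ) (𝓝 c) := by
    intro U x
    have hle : (Ultrafilter.map (fun k => g k x) U : Filter ℝ) ≤ 𝓟 (Set.Icc (-C) C) :=
      Filter.le_principal_iff.2 (Filter.mem_map.2 (Filter.univ_mem' fun k => hbd k x))
    obtain ⟨c, -, hc⟩ := isCompact_Icc.ultrafilter_le_nhds (Ultrafilter.map (fun k => g k x) U) hle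
    refine ⟨c, ?_⟩
    rwa [Ultrafilter.coe_map] at hc
  choose Φ hΦ using key
  have hΦB1 : ∀ U : Ultrafilter ℕ, BaireClassOne (Φ U) := by
    intro U
    exact hB1 _ (mem_closure_of_tendsto (tendsto_pi_nhds.2 (hΦ U)) (Filter.Eventually.of_forall hgF))
  -- bounds on ultrafilter limits at pattern points
  have hlow : ∀ (U : Ultrafilter ℕ), (U : Filter ℕ) ≤ Filter.cofinite →
      ∀ A : Set ℕ, A ∈ (U : Filter ℕ) → Φ U (xpt A) ≤ a := by
    intro U hUfree A hA
    refine le_of_tendsto (hΦ U (xpt A)) ?_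
    have hEc : (Ept A)ᶜ ∈ (U : Filter ℕ) :=
      hUfree (Filter.mem_cofinite.2 (by rw [compl_compl]; exact hEfin A))
    refine Filter.mem_of_superset (Filter.inter_mem hA hEc) ?_
    rintro k ⟨hkA, hkE⟩
    exact (hspec A k hkE).1 hkA
  have hhigh : ∀ (U : Ultrafilter ℕ), (U : Filter ℕ) ≤ Filter.cofinite →
      ∀ A : Set ℕ, Aᶜ ∈ (U : Filter ℕ) → b ≤ Φ U (xpt A) := by
    intro U hUfree A hA
    refine ge_of_tendsto (hΦ U (xpt A)) ?_
    have hEc : (Ept A)ᶜ ∈ (U : Filter ℕ) :=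
      hUfree (Filter.mem_cofinite.2 (by rw [compl_compl]; exact hEfin A))
    refine Filter.mem_of_superset (Filter.inter_mem hA hEc) ?_
    rintro k ⟨hkA, hkE⟩
    exact (hspec A k hkE).2 hkA
  -- the independent family and associated ultrafilters
  obtain ⟨A, hA⟩ := exists_indep_family
  have hAinj : Function.Injective A := by
    intro x y hxy
    by_contra hne
    have := hA {x} {y} (Set.finite_singleton x) (Set.finite_singleton y)
      (Set.disjoint_singleton.2 hne)
    simp only [Set.mem_singleton_iff, Set.iInter_iInter_eq_left] at this
    obtain ⟨k, hk1, hk2⟩ := this.nonempty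
    exact hk2 (hxy ▸ hk1)
  have hUT : ∀ T : Set ℝ, ∃ U : Ultrafilter ℕ, ((U : Filter ℕ) ≤ Filter.cofinite) ∧
      (∀ x ∈ T, A x ∈ (U : Filter ℕ)) ∧ (∀ x ∉ T, (A x)ᶜ ∈ (U : Filter ℕ)) := by
    intro T
    set 𝒜 : Set (Set ℕ) := (A '' T) ∪ ((fun x => (A x)ᶜ) '' Tᶜ) with h𝒜
    have hfip : ∀ t ⊆ 𝒜, t.Finite → (⋂₀ t).Infinite := by
      intro t hts htf
      set P : Set ℝ := {x ∈ T | A x ∈ t} with hP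
      set M : Set ℝ := {x ∈ Tᶜ | (A x)ᶜ ∈ t} with hM
      have hPfin : P.Finite := by
        have : P ⊆ A ⁻¹' t := fun x hx => hx.2
        exact (Set.Finite.preimage hAinj.injOn htf).subset this
      have hMfin : M.Finite := by
        have hinj2 : Function.Injective (fun x => (A x)ᶜ) :=
          fun x y h => hAinj (compl_injective h)
        have : M ⊆ (fun x => (A x)ᶜ) ⁻¹' t := fun x hx => hx.2
        exact (Set.Finite.preimage hinj2.injOn htf).subset this
      have hdisj : Disjoint P M := by
        rw [Set.disjoint_left]
        rintro x ⟨hxT, -⟩ ⟨hxT', -⟩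
        exact hxT' hxT
      refine ((hA P M hPfin hMfin hdisj).mono ?_)
      rintro k ⟨hk1, hk2⟩
      intro s hs
      rcases hts hs with ⟨x, hxT, rfl⟩ | ⟨x, hxT, rfl⟩
      · exact Set.mem_iInter₂.1 hk1 x ⟨hxT, hs⟩
      · exact Set.mem_iInter₂.1 hk2 x ⟨hxT, hs⟩
    obtain ⟨U, hU1, hU2⟩ := exists_free_ultra hfip
    refine ⟨U, hU1, fun x hx => hU2 _ (Or.inl ⟨x, hx, rfl⟩),
      fun x hx => hU2 _ (Or.inr ⟨x, hx, rfl⟩)⟩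
  choose UT hUTfree hUTin hUTout using hUT
  -- basis encoding of closed sets
  obtain ⟨bset, hbc, -, hbasis⟩ := TopologicalSpace.exists_countable_basis X
  have hbne : bset.Nonempty := by
    by_contra hbe
    rw [Set.not_nonempty_iff_eq_empty] at hbe
    have := hbasis.sUnion_eq
    rw [hbe] at this
    simp only [Set.sUnion_empty] at this
    exact (Set.eq_empty_iff_forall_notMem.1 this.symm) (Classical.arbitrary X) trivial
  obtain ⟨v, hv⟩ := hbc.exists_eq_range hbne
  let enc : Set X → Set ℕ := fun c => {m | v m ⊆ cᶜ}
  have hrec : ∀ c : Set X, IsClosed c → (⋃ m ∈ enc c, v m)ᶜ = c := by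
    intro c hc
    have : (⋃ m ∈ enc c, v m) = cᶜ := by
      conv_rhs => rw [hbasis.open_eq_sUnion' hc.isOpen_compl]
      ext z
      simp only [Set.mem_iUnion, Set.mem_sUnion, Set.mem_setOf_eq, exists_prop]
      constructor
      · rintro ⟨m, hm, hz⟩
        exact ⟨v m, ⟨by rw [hv]; exact Set.mem_range_self m, hm⟩, hz⟩
      · rintro ⟨s, ⟨hsb, hsc⟩, hz⟩
        rw [hv] at hsb
        obtain ⟨m, rfl⟩ := hsb
        exact ⟨m, hsc, hz⟩
    rw [this, compl_compl]
  -- decompositions of preimages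
  have hB1' : ∀ T : Set ℝ, ∀ q : ℚ, ∃ h : ℕ → Set X, (∀ n, IsClosed (h n)) ∧
      Φ (UT T) ⁻¹' (Set.Ioi (q:ℝ)) = ⋃ n, h n :=
    fun T q => hΦB1 (UT T) (Set.Ioi (q:ℝ)) isOpen_Ioi
  choose hfun hclosed hdecomp using hB1'
  let Ψ : Set ℝ → ℚ → ℕ → Set ℕ := fun T q n => enc (hfun T q n)
  -- Ψ is injective
  have hΨmono : ∀ T T' : Set ℝ, Ψ T = Ψ T' → T ⊆ T' := by
    intro T T' hEq x hxT
    by_contra hxT'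
    have h1 : Φ (UT T) (xpt (A x)) ≤ a :=
      hlow (UT T) (hUTfree T) (A x) (hUTin T x hxT)
    have h2 : b ≤ Φ (UT T') (xpt (A x)) :=
      hhigh (UT T') (hUTfree T') (A x) (hUTout T' x hxT')
    obtain ⟨q, hq1, hq2⟩ := exists_rat_btwn hab
    have hsets : ∀ n, hfun T q n = hfun T' q n := by
      intro n
      have henc : enc (hfun T q n) = enc (hfun T' q n) := by
        exact congrFun (congrFun hEq q) n
      rw [← hrec _ (hclosed T q n), ← hrec _ (hclosed T' q n), henc]
    have hpre : Φ (UT T) ⁻¹' (Set.Ioi (q:ℝ)) = Φ (UT T') ⁻¹' (Set.Ioi (q:ℝ)) := by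
      rw [hdecomp T q, hdecomp T' q]
      exact Set.iUnion_congr hsets
    have hin : xpt (A x) ∈ Φ (UT T') ⁻¹' (Set.Ioi (q:ℝ)) := hq2.trans_le h2
    rw [← hpre] at hin
    exact absurd (Set.mem_preimage.1 hin) (not_lt.2 (h1.trans hq1.le))
  have hΨinj : Function.Injective Ψ := by
    intro T T' h
    exact Set.Subset.antisymm (hΨmono T T' h) (hΨmono T' T h.symm)
  -- cardinality contradiction
  let E1 : (ℚ → ℕ → Set ℕ) ≃ (ℚ × ℕ → Set ℕ) := (Equiv.curry _ _ _).symm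
  let E2 : (ℚ × ℕ → Set ℕ) ≃ (ℕ → Set ℕ) :=
    Equiv.arrowCongr (Denumerable.eqv (ℚ × ℕ)) (Equiv.refl _)
  let E3 : (ℕ → Set ℕ) ≃ (ℕ × ℕ → Prop) := (Equiv.curry _ _ _).symm
  let E4 : (ℕ × ℕ → Prop) ≃ (ℕ → Prop) :=
    Equiv.arrowCongr (Denumerable.eqv (ℕ × ℕ)) (Equiv.refl _)
  have hcard : Cardinal.mk (Set ℝ) ≤ Cardinal.mk (Set ℕ) :=
    Cardinal.mk_le_of_injective (f := fun T => E4 (E3 (E2 (E1 (Ψ T)))))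
      (E4.injective.comp (E3.injective.comp (E2.injective.comp (E1.injective.comp hΨinj))))
  rw [Cardinal.mk_set, Cardinal.mk_set, Cardinal.mk_real, Cardinal.mk_nat,
    Cardinal.two_power_aleph0] at hcard
  exact absurd hcard (Cardinal.cantor Cardinal.continuum).not_ge
end

section
/- Let G be a group acting by homeomorphisms on a compact metric space X and let G₀ ≤ G be a subgroup. Denote by E(G, X) the closure of {x ↦ g·x : g ∈ G} in the product space X^X, and similarly E(G₀, X). Assume: (i) every p ∈ E(G₀, X) is a fragmented map from X to X; (ii) for every p ∈ E(G, X) and every x ∈ X the preimage p⁻¹({x}) is countable; (iii) for every x ∈ X the set {g ∈ G₀ : g·x = x} is finite. Let f : X → ℝ be a bounded function with only finitely many points of discontinuity. Then the family {x ↦ f(g·x) : g ∈ G₀} is tame: it contains no independent sequence. -/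
/-- A map `p : X → X` on a metric space is *fragmented* if for every nonempty `A ⊆ X`
and every `ε > 0` there is an open `O` with `O ∩ A ≠ ∅` and `p (O ∩ A)` `ε`-small. -/
def IsFragmentedMap {X : Type*} [MetricSpace X] (p : X → X) : Prop :=
  ∀ A : Set X, A.Nonempty → ∀ ε : ℝ, 0 < ε → ∃ O : Set X, IsOpen O ∧ (O ∩ A).Nonempty ∧
    ∀ x ∈ O ∩ A, ∀ y ∈ O ∩ A, dist (p x) (p y) ≤ ε

open Filter Topology Set Function PiNat

instance : Uncountable (ℕ → Bool) := by
  rw [← not_countable_iff, ← Cardinal.mk_le_aleph0_iff, not_le]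
  simpa using Cardinal.cantor Cardinal.aleph0

section ClosedOver

variable {α X : Type*} [TopologicalSpace α] [TopologicalSpace X] {V : Set α}
  {W : Set (α × X)}

def IsClosedOver (V : Set α) (W : Set (α × X)) : Prop :=
  IsClosed W ∧ Prod.fst '' W = V

lemma isClosedOver_sInter [CompactSpace X] {c : Set (Set (α × X))}
    (hc : IsChain (· ⊆ ·) c) (hne : c.Nonempty) (hV : ∀ W ∈ c, IsClosedOver V W) :
    IsClosedOver V (⋂₀ c) := by
  refine ⟨isClosed_sInter fun W hW => (hV W hW).1, subset_antisymm ?_ fun ω hω => ?_⟩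
  · obtain ⟨W, hW⟩ := hne
    exact (image_mono (sInter_subset_of_mem hW)).trans (hV W hW).2.le
  have : Nonempty c := hne.to_subtype
  by_contra hω'
  obtain ⟨⟨W, hW⟩, hWω⟩ := (isCompact_singleton.prod isCompact_univ).elim_directed_family_closed
    (fun W : c => (W : Set (α × X))) (fun W => (hV W W.2).1)
    (by
      refine eq_empty_of_forall_notMem fun q ⟨⟨hq, _⟩, hqc⟩ => hω' ⟨q, ?_, hq⟩
      simpa using hqc)
    fun W W' => (hc.total W.2 W'.2).elim (fun h => ⟨W, subset_rfl, h⟩)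
      fun h => ⟨W', h, subset_rfl⟩
  rw [← (hV W hW).2] at hω
  obtain ⟨q, hqW, rfl⟩ := hω
  exact hWω.subset ⟨⟨rfl, trivial⟩, hqW⟩

lemma exists_minimal_isClosedOver_subset [CompactSpace X] {Y : Set (α × X)}
    (hY : IsClosedOver V Y) : ∃ W ⊆ Y, Minimal (IsClosedOver V) W :=
  zorn_superset_nonempty {W | IsClosedOver V W}
    (fun c hcV hc hne => ⟨⋂₀ c, isClosedOver_sInter hc hne hcV, fun _ => sInter_subset_of_mem⟩)
    Y hY

lemma Minimal.isClosedOver_inter_preimage_fst (hW : Minimal (IsClosedOver V) W) {V' : Set α}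
    (hV' : IsClopen V') (hV'V : V' ⊆ V) :
    Minimal (IsClosedOver V') (W ∩ Prod.fst ⁻¹' V') := by
  refine ⟨⟨hW.prop.1.inter (hV'.isClosed.preimage continuous_fst), ?_⟩, fun Y hY hYW => ?_⟩
  · rw [image_inter_preimage, hW.prop.2, inter_eq_right.2 hV'V]
  have hcover : IsClosedOver V (Y ∪ (W \ Prod.fst ⁻¹' V')) := by
    refine ⟨hY.1.union (hW.prop.1.sdiff (hV'.isOpen.preimage continuous_fst)), ?_⟩
    rw [image_union, hY.2, image_sdiff_preimage, hW.prop.2, union_sdiff_cancel hV'V]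
  intro q ⟨hqW, hqV'⟩
  rcases hW.2 hcover (union_subset (hYW.trans inter_subset_left) sdiff_subset) hqW with h | h
  · exact h
  · exact absurd hqV' h.2

lemma Minimal.exists_isOpen_inter_preimage_fst_subset [CompactSpace X]
    (hW : Minimal (IsClosedOver V) W) (hV : IsOpen V) {O : Set X} (hO : IsOpen O)
    (hWO : (W ∩ Prod.snd ⁻¹' O).Nonempty) :
    ∃ V' ⊆ V, IsOpen V' ∧ V'.Nonempty ∧ W ∩ Prod.fst ⁻¹' V' ⊆ Prod.snd ⁻¹' O := by
  set K := Prod.fst '' (W \ Prod.snd ⁻¹' O)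
  have hWK : IsClosed (W \ Prod.snd ⁻¹' O) := hW.prop.1.sdiff (hO.preimage continuous_snd)
  have hK : IsClosed K := isClosedMap_fst_of_compactSpace _ hWK
  have hKV : K ⊆ V := hW.prop.2 ▸ image_mono sdiff_subset
  have hVK : ¬V ⊆ K := by
    intro hVK
    obtain ⟨q, hqW, hqO⟩ := hWO
    exact (hW.2 ⟨hWK, hKV.antisymm hVK⟩ sdiff_subset hqW).2 hqO
  refine ⟨V \ K, sdiff_subset, hV.sdiff hK, sdiff_nonempty.2 hVK, ?_⟩
  rintro q ⟨hqW, -, hqK⟩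
  by_contra hqO
  exact hqK ⟨q, ⟨hqW, hqO⟩, rfl⟩

end ClosedOver

section CylinderCell

variable {X : Type*} [TopologicalSpace X] {W : Set ((ℕ → Bool) × X)}

lemma isClopen_cylinder {E : ℕ → Type*} [∀ n, TopologicalSpace (E n)]
    [∀ n, DiscreteTopology (E n)] (x : ∀ n, E n) (N : ℕ) : IsClopen (cylinder x N) :=
  ⟨by rw [cylinder_eq_pi]; exact isClosed_set_pi fun _ _ => isClosed_discrete _,
    isOpen_cylinder _ x N⟩

def IsCylinderCell (W : Set ((ℕ → Bool) × X)) : Prop :=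
  ∃ ω N, Minimal (IsClosedOver (cylinder ω N)) W

lemma IsCylinderCell.isClosed (hW : IsCylinderCell W) : IsClosed W :=
  let ⟨_, _, h⟩ := hW; h.prop.1

lemma IsCylinderCell.nonempty (hW : IsCylinderCell W) : W.Nonempty := by
  obtain ⟨ω, N, h⟩ := hW
  have hω : ω ∈ Prod.fst '' W := h.prop.2 ▸ self_mem_cylinder ω N
  exact hω.imp fun _ hq => hq.1

lemma Minimal.isCylinderCell_inter_preimage_fst {ω ω' : ℕ → Bool} {N N' : ℕ}
    (hW : Minimal (IsClosedOver (cylinder ω N)) W) (h : cylinder ω' N' ⊆ cylinder ω N) :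
    IsCylinderCell (W ∩ Prod.fst ⁻¹' cylinder ω' N') :=
  ⟨ω', N', hW.isClosedOver_inter_preimage_fst (isClopen_cylinder ω' N') h⟩

lemma IsCylinderCell.exists_subset_notMem (hW : IsCylinderCell W) (s : (ℕ → Bool) × X) :
    ∃ W' ⊆ W, IsCylinderCell W' ∧ s ∉ W' := by
  obtain ⟨ω, N, hW⟩ := hW
  set ω' := update ω N (!s.1 N)
  have hsub : cylinder ω' (N + 1) ⊆ cylinder ω N := by
    rw [← (mem_cylinder_iff_eq.1 (update_mem_cylinder ω N (!s.1 N)))]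
    exact cylinder_anti ω' N.le_succ
  refine ⟨_, inter_subset_left, hW.isCylinderCell_inter_preimage_fst hsub, fun hs => ?_⟩
  have := mem_cylinder_iff.1 hs.2 N N.lt_succ_self
  simp [ω'] at this

lemma IsCylinderCell.exists_subset_preimage_snd [CompactSpace X] (hW : IsCylinderCell W)
    {O : Set X} (hO : IsOpen O) (hWO : (W ∩ Prod.snd ⁻¹' O).Nonempty) :
    ∃ W' ⊆ W, IsCylinderCell W' ∧ W' ⊆ Prod.snd ⁻¹' O := by
  obtain ⟨ω, N, hW⟩ := hW
  obtain ⟨V', hV'V, hV', ⟨ω', hω'⟩, hV'O⟩ :=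
    hW.exists_isOpen_inter_preimage_fst_subset (isOpen_cylinder _ ω N) hO hWO
  obtain ⟨_, ⟨ω'', N', rfl⟩, -, hcyl⟩ :=
    (isTopologicalBasis_cylinders _).exists_subset_of_mem_open hω' hV'
  exact ⟨_, inter_subset_left, hW.isCylinderCell_inter_preimage_fst (hcyl.trans hV'V),
    (inter_subset_inter_right _ (preimage_mono hcyl)).trans hV'O⟩

lemma not_countable_cylinder (ω : ℕ → Bool) (N : ℕ) : ¬(cylinder ω N).Countable := by
  intro h
  have : Countable (cylinder ω N) := h.to_subtype
  refine not_countable (α := ℕ → Bool) (Injective.countable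
    (f := fun t => (⟨fun n => if n < N then ω n else t (n - N), fun i hi => by simp [hi]⟩ :
      cylinder ω N)) fun t t' htt' => funext fun k => ?_)
  simpa using congrFun (congrArg Subtype.val htt') (k + N)

-- Flipping all coordinates from `N` on swaps the two colour classes of the cylinder.
lemma not_countable_setOf_mem_ultrafilter (U : Ultrafilter ℕ) (hU : (U : Filter ℕ) ≤ cofinite)
    (ω : ℕ → Bool) (N : ℕ) (c : Bool) :
    ¬{ω' ∈ cylinder ω N | {n | ω' n = c} ∈ U}.Countable := by
  intro h
  set flipTail : (ℕ → Bool) → ℕ → Bool := fun ω' n => if n < N then ω' n else !ω' n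
  refine not_countable_cylinder ω N ((h.union (h.image flipTail)).mono fun ω' hω' => ?_)
  have hflipTail : flipTail ω' ∈ cylinder ω N := fun i hi => by simp [flipTail, hi, hω' i hi]
  rcases U.mem_or_compl_mem {n | ω' n = c} with hc | hc
  · exact Or.inl ⟨hω', hc⟩
  refine Or.inr ⟨flipTail ω', ⟨hflipTail, ?_⟩,
    funext fun n => by by_cases hn : n < N <;> simp [flipTail, hn]⟩
  filter_upwards [hc, hU (finite_lt_nat N).compl_mem_cofinite] with n (hn : ω' n ≠ c)
    (hnN : ¬n < N)
  simpa [flipTail, hnN, Bool.eq_not] using hn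

lemma IsCylinderCell.exists_mem_diff_setOf_mem_ultrafilter (hW : IsCylinderCell W)
    (U : Ultrafilter ℕ) (hU : (U : Filter ℕ) ≤ cofinite) {S : Set ((ℕ → Bool) × X)}
    (hS : S.Countable) (c : Bool) : ∃ q ∈ W, q ∉ S ∧ {n | q.1 n = c} ∈ U := by
  obtain ⟨ω, N, hW⟩ := hW
  by_contra! h
  refine not_countable_setOf_mem_ultrafilter U hU ω N c ((hS.image Prod.fst).mono ?_)
  rintro ω' ⟨hω', hc⟩
  obtain ⟨q, hqW, rfl⟩ := hW.prop.2.symm ▸ hω'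
  by_contra hqS
  exact h q hqW (fun hq => hqS ⟨q, hq, rfl⟩) hc

end CylinderCell

section BandProfiles

variable {X : Type*} [TopologicalSpace X] {φ : ℕ → X → ℝ} {a b : ℝ}

def band (a b : ℝ) (c : Bool) : Set ℝ := bif c then Ioi b else Iio a

lemma eq_of_mem_closure_band (hab : a < b) {y : ℝ} {c c' : Bool}
    (hc : y ∈ closure (band a b c)) (hc' : y ∈ closure (band a b c')) : c = c' := by
  cases c <;> cases c' <;> simp only [band, cond_true, cond_false, closure_Iio, closure_Ioi,
    mem_Iic, mem_Ici] at hc hc' <;> first | rfl | linarith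

def bandProfiles (φ : ℕ → X → ℝ) (a b : ℝ) : Set ((ℕ → Bool) × X) :=
  {q | ∀ n, q.2 ∈ closure (φ n ⁻¹' band a b (q.1 n))}

lemma isClosed_bandProfiles : IsClosed (bandProfiles φ a b) := by
  have : bandProfiles φ a b = ⋂ n, ⋃ c : Bool,
      (fun q : (ℕ → Bool) × X => q.1 n) ⁻¹' {c} ∩ Prod.snd ⁻¹' closure (φ n ⁻¹' band a b c) := by
    ext q
    simp [bandProfiles]
  rw [this]
  exact isClosed_iInter fun n => isClosed_iUnion_of_finite fun c =>
    (isClosed_discrete _ |>.preimage ((continuous_apply n).comp continuous_fst)).inter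
      (isClosed_closure.preimage continuous_snd)

lemma fst_image_bandProfiles [CompactSpace X]
    (hind : ∀ P M : Finset ℕ, Disjoint P M →
      ((⋂ n ∈ P, {z | φ n z < a}) ∩ ⋂ n ∈ M, {z | b < φ n z}).Nonempty) :
    Prod.fst '' bandProfiles φ a b = univ := by
  refine eq_univ_of_forall fun ω => ?_
  have hfin : ∀ u : Finset ℕ, (univ ∩ ⋂ n ∈ u, closure (φ n ⁻¹' band a b (ω n))).Nonempty := by
    intro u
    obtain ⟨z, hzP, hzM⟩ := hind (u.filter (ω · = false)) (u.filter (ω · = true))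
      (Finset.disjoint_filter.2 fun n _ h => by simp [h])
    refine ⟨z, trivial, mem_iInter₂.2 fun n hn => subset_closure ?_⟩
    cases hωn : ω n
    · simpa [band, hωn] using mem_iInter₂.1 hzP n (Finset.mem_filter.2 ⟨hn, hωn⟩)
    · simpa [band, hωn] using mem_iInter₂.1 hzM n (Finset.mem_filter.2 ⟨hn, hωn⟩)
  obtain ⟨z, -, hz⟩ := isCompact_univ.inter_iInter_nonempty _ (fun _ => isClosed_closure) hfin
  exact ⟨(ω, z), mem_iInter.1 hz, rfl⟩

lemma apply_mem_closure_band {q : (ℕ → Bool) × X} (hq : q ∈ bandProfiles φ a b) {n : ℕ}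
    (hn : ContinuousAt (φ n) q.2) : φ n q.2 ∈ closure (band a b (q.1 n)) :=
  hn.continuousWithinAt.mem_closure (hq n) (mapsTo_preimage _ _)

-- Two patterns of the same point can only differ where some `φ n` is discontinuous.
lemma finite_setOf_mem_bandProfiles (hab : a < b) {z : X}
    (hz : {n | ¬ContinuousAt (φ n) z}.Finite) :
    {ω | (ω, z) ∈ bandProfiles φ a b}.Finite := by
  have := hz.to_subtype
  refine Finite.of_finite_image (f := fun ω (n : {n | ¬ContinuousAt (φ n) z}) => ω n)
    (toFinite _) fun ω hω ω' hω' hωω' => funext fun n => ?_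
  by_cases hn : ContinuousAt (φ n) z
  · exact eq_of_mem_closure_band hab (apply_mem_closure_band hω hn)
      (apply_mem_closure_band hω' hn)
  · exact congrFun hωω' ⟨n, hn⟩

lemma countable_bandProfiles_inter_preimage_snd (hab : a < b)
    (hφ : ∀ z, {n | ¬ContinuousAt (φ n) z}.Finite) {B : Set X} (hB : B.Countable) :
    (bandProfiles φ a b ∩ Prod.snd ⁻¹' B).Countable := by
  refine (hB.biUnion fun z _ => ((finite_setOf_mem_bandProfiles hab (hφ z)).prod
    (finite_singleton z)).countable).mono ?_
  rintro q ⟨hq, hqB⟩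
  exact mem_biUnion hqB ⟨hq, rfl⟩

lemma mem_closure_band_of_tendsto {q : (ℕ → Bool) × X} (hq : q ∈ bandProfiles φ a b)
    {U : Ultrafilter ℕ} (hU : (U : Filter ℕ) ≤ cofinite)
    (hφ : {n | ¬ContinuousAt (φ n) q.2}.Finite) {c : Bool} (hc : {n | q.1 n = c} ∈ U) {y : ℝ}
    (hy : Tendsto (fun n => φ n q.2) U (𝓝 y)) : y ∈ closure (band a b c) :=
  isClosed_closure.mem_of_tendsto hy <| by
    filter_upwards [hc, hU hφ.compl_mem_cofinite] with n hn hcont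
    exact hn ▸ apply_mem_closure_band hq (not_not.1 hcont)

end BandProfiles

lemma exists_notMem_forall_mem_closure {Y Z ι : Type*} [TopologicalSpace Y] [CompactSpace Y]
    [PseudoMetricSpace Z] (P : Set Y → Prop) (π : Y → Z) (R : ι → Set Z)
    (hP : ∀ W, P W → IsClosed W ∧ W.Nonempty)
    (havoid : ∀ W, P W → ∀ s, ∃ W' ⊆ W, P W' ∧ s ∉ W')
    (hshrink : ∀ W, P W → ∀ ε > 0, ∃ W' ⊆ W, P W' ∧ ∀ i, ∃ x ∈ R i, ∀ y ∈ W', dist x (π y) ≤ ε)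
    {W₀ : Set Y} (hW₀ : P W₀) {S : Set Y} (hS : S.Countable) :
    ∃ y ∈ W₀, y ∉ S ∧ ∀ i, π y ∈ closure (R i) := by
  have : Nonempty Y := (hP W₀ hW₀).2.to_subtype.map Subtype.val
  obtain ⟨e, hSe⟩ := countable_iff_exists_subset_range.1 hS
  have hnext : ∀ (m : ℕ) (W : {W // P W}), ∃ W' : {W // P W}, W'.1 ⊆ W.1 ∧ e m ∉ W'.1 ∧
      ∀ i, ∃ x ∈ R i, ∀ y ∈ W'.1, dist x (π y) ≤ 1 / (m + 1) := by
    intro m ⟨W, hW⟩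
    obtain ⟨W₁, hW₁W, hW₁, hR⟩ := hshrink W hW (1 / (m + 1)) (by positivity)
    obtain ⟨W₂, hW₂W₁, hW₂, hm⟩ := havoid W₁ hW₁ (e m)
    exact ⟨⟨W₂, hW₂⟩, hW₂W₁.trans hW₁W, hm, fun i => (hR i).imp fun x hx =>
      ⟨hx.1, fun y hy => hx.2 y (hW₂W₁ hy)⟩⟩
  choose next hnext_sub hnext_notMem hnext_dist using hnext
  let Ws : ℕ → {W // P W} := fun m => Nat.rec ⟨W₀, hW₀⟩ (fun m W => next m W) m
  obtain ⟨y, hy⟩ := IsCompact.nonempty_iInter_of_sequence_nonempty_isCompact_isClosed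
    (fun m => (Ws m).1) (fun m => hnext_sub m (Ws m)) (fun m => (hP _ (Ws m).2).2)
    (hP _ hW₀).1.isCompact fun m => (hP _ (Ws m).2).1
  rw [mem_iInter] at hy
  refine ⟨y, hy 0, fun hyS => ?_, fun i => Metric.mem_closure_iff.2 fun ε hε => ?_⟩
  · obtain ⟨k, rfl⟩ := hSe hyS
    exact hnext_notMem k (Ws k) (hy (k + 1))
  · obtain ⟨m, hm⟩ := exists_nat_one_div_lt hε
    obtain ⟨x, hxR, hx⟩ := hnext_dist m (Ws m) i
    exact ⟨x, hxR, by rw [dist_comm]; exact (hx y (hy (m + 1))).trans_lt hm⟩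

lemma IsCylinderCell.exists_subset_forall_dist_le {X ι : Type*} [MetricSpace X] [CompactSpace X]
    {W : Set ((ℕ → Bool) × X)} (hW : IsCylinderCell W) {p : X → X} (hp : IsFragmentedMap p)
    {R : ι → Set X} (hR : ∀ W' ⊆ W, IsCylinderCell W' → ∀ i, ∃ u ∈ Prod.snd '' W', p u ∈ R i)
    {ε : ℝ} (hε : 0 < ε) :
    ∃ W' ⊆ W, IsCylinderCell W' ∧ ∀ i, ∃ x ∈ R i, ∀ q ∈ W', dist x (p q.2) ≤ ε := by
  obtain ⟨O, hO, ⟨_, hxO, q, hqW, rfl⟩, hOp⟩ := hp _ (hW.nonempty.image Prod.snd) ε hε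
  obtain ⟨W', hW'W, hW', hW'O⟩ := hW.exists_subset_preimage_snd hO ⟨q, hqW, hxO⟩
  have hmem : ∀ q ∈ W', q.2 ∈ O ∩ Prod.snd '' W := fun q hq => ⟨hW'O hq, q, hW'W hq, rfl⟩
  refine ⟨W', hW'W, hW', fun i => ?_⟩
  obtain ⟨_, ⟨u, hu, rfl⟩, hpu⟩ := hR W' hW'W hW' i
  exact ⟨_, hpu, fun q hq => hOp _ (hmem u hu) _ (hmem q hq)⟩

theorem not_isIndependentSeq_of_isFragmentedMap {X : Type*} [MetricSpace X] [CompactSpace X]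
    {φ : ℕ → X → ℝ} {f : X → ℝ} {p : X → X} (U : Ultrafilter ℕ) (hU : (U : Filter ℕ) ≤ cofinite)
    (hφ : ∀ z, {n | ¬ContinuousAt (φ n) z}.Finite)
    (hlim : ∀ z, ContinuousAt f (p z) → Tendsto (fun n => φ n z) U (𝓝 (f (p z))))
    (hcount : {z | ¬ContinuousAt f (p z)}.Countable) (hfrag : IsFragmentedMap p) :
    ¬IsIndependentSeq φ := by
  rintro ⟨a, b, hab, hind⟩
  set S := bandProfiles φ a b ∩ Prod.snd ⁻¹' {z | ¬ContinuousAt f (p z)}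
  have hS : S.Countable := countable_bandProfiles_inter_preimage_snd hab hφ hcount
  have hcont : ∀ q ∈ bandProfiles φ a b, q ∉ S → ContinuousAt f (p q.2) :=
    fun q hq hqS => not_not.1 fun h => hqS ⟨hq, h⟩
  have hR : ∀ W ⊆ bandProfiles φ a b, IsCylinderCell W →
      ∀ c, ∃ u ∈ Prod.snd '' W, p u ∈ f ⁻¹' closure (band a b c) := by
    intro W hWZ hW c
    obtain ⟨q, hqW, hqS, hqc⟩ := hW.exists_mem_diff_setOf_mem_ultrafilter U hU hS c
    exact ⟨q.2, mem_image_of_mem _ hqW, mem_closure_band_of_tendsto (hWZ hqW) hU (hφ _) hqc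
      (hlim _ (hcont q (hWZ hqW) hqS))⟩
  set P : Set ((ℕ → Bool) × X) → Prop := fun W => IsCylinderCell W ∧ W ⊆ bandProfiles φ a b
  have havoid : ∀ W, P W → ∀ s, ∃ W' ⊆ W, P W' ∧ s ∉ W' := fun W hW s =>
    (hW.1.exists_subset_notMem s).imp fun W' ⟨hW'W, hW', hs⟩ =>
      ⟨hW'W, ⟨hW', hW'W.trans hW.2⟩, hs⟩
  have hshrink : ∀ W, P W → ∀ ε > 0, ∃ W' ⊆ W, P W' ∧
      ∀ c, ∃ x ∈ f ⁻¹' closure (band a b c), ∀ q ∈ W', dist x (p q.2) ≤ ε := fun W hW ε hε =>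
    (hW.1.exists_subset_forall_dist_le hfrag (fun W' hW'W => hR W' (hW'W.trans hW.2)) hε).imp
      fun W' ⟨hW'W, hW', hdist⟩ => ⟨hW'W, ⟨hW', hW'W.trans hW.2⟩, hdist⟩
  obtain ⟨W₀, hW₀Z, hW₀⟩ := exists_minimal_isClosedOver_subset (V := cylinder (fun _ => false) 0)
    ⟨isClosed_bandProfiles, by rw [cylinder_zero]; exact fst_image_bandProfiles hind⟩
  obtain ⟨y, hyW₀, hyS, hy⟩ := exists_notMem_forall_mem_closure P (p ∘ Prod.snd) _
    (fun W hW => ⟨hW.1.isClosed, hW.1.nonempty⟩) havoid hshrink ⟨⟨_, _, hW₀⟩, hW₀Z⟩ hS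
  have hband : ∀ c, f (p y.2) ∈ closure (band a b c) := fun c => by
    simpa using (hcont y (hW₀Z hyW₀) hyS).continuousWithinAt.mem_closure (hy c)
      (mapsTo_preimage _ _)
  exact Bool.false_ne_true (eq_of_mem_closure_band hab (hband false) (hband true))

lemma IsIndependentSeq.injective {Z : Type*} {φ : ℕ → Z → ℝ} (h : IsIndependentSeq φ) :
    Injective φ := by
  intro n m hnm
  by_contra hne
  obtain ⟨a, b, hab, hind⟩ := h
  obtain ⟨x, hxn, hxm⟩ := hind {n} {m} (Finset.disjoint_singleton.2 hne)
  simp only [Finset.mem_singleton, iInter_iInter_eq_left, hnm] at hxn hxm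
  exact lt_asymm hxm (hxn.trans hab)

section Stabilizers

variable {G X : Type*} [Group G] [MulAction G X] {G₀ : Subgroup G} {z : X}

lemma finite_setOf_mem_smul_eq (hz : {g : G | g ∈ G₀ ∧ g • z = z}.Finite) (x : X) :
    {g : G | g ∈ G₀ ∧ g • z = x}.Finite := by
  rcases eq_empty_or_nonempty {g : G | g ∈ G₀ ∧ g • z = x} with h | ⟨g₀, hg₀, hg₀z⟩
  · exact h ▸ finite_empty
  refine (hz.image (g₀ * ·)).subset fun g ⟨hg, hgz⟩ =>
    ⟨g₀⁻¹ * g, ⟨mul_mem (inv_mem hg₀) hg, ?_⟩, ?_⟩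
  · rw [mul_smul, hgz, ← hg₀z, inv_smul_smul]
  · simp

lemma finite_setOf_smul_mem (hz : {g : G | g ∈ G₀ ∧ g • z = z}.Finite) {g : ℕ → G}
    (hg₀ : ∀ n, g n ∈ G₀) (hg : Injective g) {D : Set X} (hD : D.Finite) :
    {n | g n • z ∈ D}.Finite :=
  ((hD.biUnion fun x _ => finite_setOf_mem_smul_eq hz x).preimage hg.injOn).subset
    fun n hn => mem_biUnion hn ⟨hg₀ n, rfl⟩

end Stabilizers

theorem stmt12_general {G X : Type*} [Group G] [MetricSpace X] [CompactSpace X] [MulAction G X]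
    (hcont : ∀ g : G, Continuous fun x : X => g • x) (G₀ : Subgroup G)
    -- (i) every element of `E(G₀, X)` is a fragmented map (tameness of `(G₀, X)`)
    (hi : ∀ p ∈ closure (Set.range fun g : G₀ => fun x : X => (g : G) • x),
      IsFragmentedMap p)
    -- (ii) every element of `E(G, X)` has countable fibers
    (hii : ∀ p ∈ closure (Set.range fun g : G => fun x : X => g • x),
      ∀ x : X, (p ⁻¹' {x}).Countable)
    -- (iii) stabilizers in `G₀` are finite
    (hiii : ∀ x : X, {g : G | g ∈ G₀ ∧ g • x = x}.Finite)
    (f : X → ℝ)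
    (hfdisc : {x : X | ¬ ContinuousAt f x}.Finite) :
    -- then `{x ↦ f(g•x) : g ∈ G₀}` contains no independent sequence
    ¬ ∃ g : ℕ → G, (∀ n, g n ∈ G₀) ∧ IsIndependentSeq fun n (x : X) => f (g n • x) := by
  rintro ⟨g, hg₀, hind⟩
  have hg : Injective g := fun n m h => hind.injective (congrArg (fun γ (x : X) => f (γ • x)) h)
  let U := hyperfilter ℕ
  let p : X → X := fun x => (U.map fun n => g n • x).lim
  have hp : ∀ x, Tendsto (fun n => g n • x) U (𝓝 (p x)) := fun x => Ultrafilter.le_nhds_lim _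
  have hpU : Tendsto (fun n (x : X) => g n • x) U (𝓝 p) := tendsto_pi_nhds.2 hp
  have hpE₀ : p ∈ closure (range fun γ : G₀ => fun x : X => (γ : G) • x) :=
    mem_closure_of_tendsto hpU (.of_forall fun n => ⟨⟨g n, hg₀ n⟩, rfl⟩)
  have hpE : p ∈ closure (range fun γ : G => fun x : X => γ • x) :=
    mem_closure_of_tendsto hpU (.of_forall fun n => ⟨g n, rfl⟩)
  have hcount : {z | ¬ContinuousAt f (p z)}.Countable := by
    refine (hfdisc.countable.biUnion fun x _ => hii p hpE x).mono fun z hz => ?_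
    exact mem_biUnion hz (mem_singleton (p z))
  refine not_isIndependentSeq_of_isFragmentedMap U hyperfilter_le_cofinite
    (fun z => (finite_setOf_smul_mem (hiii z) hg₀ hg hfdisc).subset fun n hn hcn =>
      hn (hcn.comp (hcont (g n)).continuousAt))
    (fun z hz => hz.tendsto.comp (hp z)) hcount (hi p hpE₀) hind

theorem stmt12 {G X : Type*} [Group G] [MetricSpace X] [CompactSpace X] [MulAction G X]
    (hcont : ∀ g : G, Continuous fun x : X => g • x) (G₀ : Subgroup G)
    -- (i) every element of `E(G₀, X)` is a fragmented map (tameness of `(G₀, X)`)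
    (hi : ∀ p ∈ closure (Set.range fun g : G₀ => fun x : X => (g : G) • x),
      IsFragmentedMap p)
    -- (ii) every element of `E(G, X)` has countable fibers
    (hii : ∀ p ∈ closure (Set.range fun g : G => fun x : X => g • x),
      ∀ x : X, (p ⁻¹' {x}).Countable)
    -- (iii) stabilizers in `G₀` are finite
    (hiii : ∀ x : X, {g : G | g ∈ G₀ ∧ g • x = x}.Finite)
    (f : X → ℝ) (hfbdd : ∃ C : ℝ, ∀ x : X, |f x| ≤ C)
    (hfdisc : {x : X | ¬ ContinuousAt f x}.Finite) :
    -- then `{x ↦ f(g•x) : g ∈ G₀}` contains no independent sequence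
    ¬ ∃ g : ℕ → G, (∀ n, g n ∈ G₀) ∧ IsIndependentSeq fun n (x : X) => f (g n • x) :=
  stmt12_general hcont G₀ hi hii hiii f hfdisc
end

section
/- Let 0 = c₀ < c₁ < ⋯ < c_d < c_{d+1} = 1 determine the partition of the circle 𝕋 = ℝ/ℤ into the arcs [c_i, c_{i+1}), i = 0, …, d, and let f : 𝕋 → {0, …, d} be the coloring map with f(t) = i exactly when t lies in the arc [c_i, c_{i+1}). Fix α₁, …, α_k ∈ 𝕋 and z ∈ 𝕋, and define the multidimensional Sturmian-like coding function φ : ℤ^k → ℝ by φ(n₁, …, n_k) = f(z + n₁α₁ + ⋯ + n_kα_k). Then φ is a tame function on the discrete group ℤ^k; in particular, the family of translates {m ↦ φ(m + n) : n ∈ ℤ^k} of real-valued functions on ℤ^k contains no independent sequence. -/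
/-!
Write `t_j = z + ∑ i, s_j i • α_i`. The values of the first `N` translates at `m` form the
pattern `(f (x + t_j))_{j < N}` at the point `x = ∑ i, m_i • α_i` of the circle. Moving `x`
around the circle, this pattern can only change where some `x + t_j` crosses one of the
`d + 1` partition points, so it takes at most `(d + 1) N + 1` values. An independent
sequence realises all `2 ^ N` choices of "below `a`" / "above `b`" on its first `N` members,
hence at least `2 ^ N` distinct patterns, which is impossible once `2 ^ N > (d + 1) N + 1`.
-/

theorem IsIndependentSeq.two_pow_le_card {Z : Type*} {g : ℕ → Z → ℝ} (hg : IsIndependentSeq g)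
    {N : ℕ} (F : Finset (Fin N → ℝ)) (hF : ∀ z, (fun j : Fin N => g j z) ∈ F) :
    2 ^ N ≤ F.card := by
  obtain ⟨a, b, hab, hind⟩ := hg
  have realize (M : Finset (Fin N)) : ∃ z, ∀ j, (j ∈ M → b < g j z) ∧ (j ∉ M → g j z < a) := by
    obtain ⟨z, hlow, hhigh⟩ := hind (Mᶜ.map Fin.valEmbedding) (M.map Fin.valEmbedding)
      ((Finset.disjoint_map _).mpr disjoint_compl_left)
    simp only [Finset.mem_map, Fin.valEmbedding_apply, Set.mem_iInter, Set.mem_ofPred_eq,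
      forall_exists_index, and_imp] at hlow hhigh
    exact ⟨z, fun j => ⟨fun hj => hhigh _ j hj rfl,
      fun hj => hlow _ j (Finset.mem_compl.mpr hj) rfl⟩⟩
  choose w hw using realize
  calc 2 ^ N = (Finset.univ : Finset (Finset (Fin N))).card := by simp
    _ ≤ F.card := by
      refine Finset.card_le_card_of_injOn (fun M j => g j (w M)) (fun M _ => hF (w M)) ?_
      intro M₁ _ M₂ _ heq
      ext j
      have hj := congrFun heq j
      simp only at hj
      constructor
      · intro h₁; by_contra h₂; linarith [(hw M₁ j).1 h₁, (hw M₂ j).2 h₂]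
      · intro h₂; by_contra h₁; linarith [(hw M₁ j).2 h₁, (hw M₂ j).1 h₂]

theorem Nat.exists_mul_add_one_lt_two_pow (a : ℕ) : ∃ N, a * N + 1 < 2 ^ N := by
  refine ⟨2 * a + 2, ?_⟩
  have h : a + 1 ≤ 2 ^ a := Nat.lt_two_pow_self
  have h4 : 2 ^ (2 * a + 2) = 4 * (2 ^ a) ^ 2 := by ring
  rw [h4]
  nlinarith

theorem Finset.exists_mem_Icc_forall_mem_Ioc_notMem {α : Type*} [LinearOrder α] {B : Finset α}
    {p y : α} (hp : p ∈ B) (hpy : p ≤ y) :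
    ∃ v ∈ B, v ∈ Set.Icc p y ∧ ∀ u ∈ Set.Ioc v y, u ∉ B := by
  have hne : (B.filter (· ≤ y)).Nonempty := ⟨p, Finset.mem_filter.mpr ⟨hp, hpy⟩⟩
  obtain ⟨hvB, hvy⟩ := Finset.mem_filter.mp ((B.filter (· ≤ y)).max'_mem hne)
  refine ⟨_, hvB, ⟨(B.filter (· ≤ y)).le_max' p (Finset.mem_filter.mpr ⟨hp, hpy⟩), hvy⟩,
    fun u hu huB => ?_⟩
  exact hu.1.not_ge ((B.filter (· ≤ y)).le_max' u (Finset.mem_filter.mpr ⟨huB, hu.2⟩))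

theorem AddCircle.eq_fract_of_coe_eq {u v : ℝ} (hu : u ∈ Set.Ico 0 1)
    (h : (u : AddCircle (1 : ℝ)) = v) :
    u = Int.fract v := by
  rw [← AddCircle.coe_fract v] at h
  refine (AddCircle.coe_eq_coe_iff_of_mem_Ico (p := 1) (a := 0) ?_ ?_).mp h
  · simpa using hu
  · simpa using Int.fract_lt_one v

theorem AddCircle.coe_add_intCast (x : ℝ) (n : ℤ) : ((x + n : ℝ) : AddCircle (1 : ℝ)) = x := by
  rw [AddCircle.coe_add, (AddCircle.coe_eq_zero_iff (p := 1) (x := (n : ℝ))).mpr ⟨n, by simp⟩,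
    add_zero]

section ArcColoring

variable {β : Type*} {d : ℕ} {c : Fin (d + 2) → ℝ} {f : AddCircle (1 : ℝ) → β}

theorem exists_castSucc_le_lt (hc0 : c 0 = 0) (hc1 : c (Fin.last (d + 1)) = 1) {x : ℝ}
    (hx₀ : 0 ≤ x) (hx₁ : x < 1) : ∃ i : Fin (d + 1), c i.castSucc ≤ x ∧ x < c i.succ := by
  classical
  set T := Finset.univ.filter fun j => c j ≤ x
  have hne : T.Nonempty := ⟨0, by simp [T, hc0, hx₀]⟩
  have hmax : c (T.max' hne) ≤ x := (Finset.mem_filter.mp (T.max'_mem hne)).2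
  obtain ⟨i, hi⟩ : ∃ i : Fin (d + 1), i.castSucc = T.max' hne :=
    Fin.exists_castSucc_eq.mpr fun h => by rw [h, hc1] at hmax; linarith
  refine ⟨i, hi ▸ hmax, lt_of_not_ge fun hle => ?_⟩
  have := T.le_max' i.succ (by simp [T, hle])
  exact (hi ▸ Fin.castSucc_lt_succ (i := i)).not_ge this

theorem exists_coe_eq_coe_castSucc (hc0 : c 0 = 0) (hc1 : c (Fin.last (d + 1)) = 1)
    (j : Fin (d + 2)) : ∃ i : Fin (d + 1), (c j : AddCircle (1 : ℝ)) = c i.castSucc := by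
  rcases Fin.eq_castSucc_or_eq_last j with ⟨i, rfl⟩ | rfl
  · exact ⟨i, rfl⟩
  · refine ⟨0, ?_⟩
    rw [hc1, Fin.castSucc_zero, hc0, AddCircle.coe_period, QuotientAddGroup.mk_zero]

theorem apply_coe_eq_of_forall_Ioc (hc0 : c 0 = 0) (hc1 : c (Fin.last (d + 1)) = 1)
    (hf : ∀ i : Fin (d + 1), ∀ t ∈ Set.Ico (c i.castSucc) (c i.succ),
      ∀ t' ∈ Set.Ico (c i.castSucc) (c i.succ), f t = f t')
    {x y : ℝ} (hxy : x ≤ y)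
    (hgap : ∀ u ∈ Set.Ioc x y, ∀ i : Fin (d + 1), (u : AddCircle (1 : ℝ)) ≠ c i.castSucc) :
    f x = f y := by
  obtain ⟨i, hi₁, hi₂⟩ := exists_castSucc_le_lt hc0 hc1 (Int.fract_nonneg x) (Int.fract_lt_one x)
  -- `x` lies in the arc `[c_i, c_{i+1}) + ⌊x⌋`; if `y` leaves it, `y` passes the point
  -- `c_{i+1} + ⌊x⌋`, which is a partition point modulo 1
  have hx : Int.fract x + ⌊x⌋ = x := Int.fract_add_floor x
  by_cases hy : y < c i.succ + ⌊x⌋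
  · have hy' : (y : AddCircle (1 : ℝ)) = (y - ⌊x⌋ : ℝ) := by
      rw [← AddCircle.coe_add_intCast (y - ⌊x⌋) ⌊x⌋, sub_add_cancel]
    rw [← AddCircle.coe_fract x, hy']
    exact hf i _ ⟨hi₁, hi₂⟩ _ ⟨by linarith, by linarith⟩
  · exfalso
    obtain ⟨i', hi'⟩ := exists_coe_eq_coe_castSucc hc0 hc1 i.succ
    refine hgap (c i.succ + ⌊x⌋) ⟨by linarith, by linarith⟩ i' ?_
    rw [← hi', AddCircle.coe_add_intCast]

theorem exists_finset_forall_translate_mem (hc0 : c 0 = 0) (hc1 : c (Fin.last (d + 1)) = 1)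
    (hf : ∀ i : Fin (d + 1), ∀ t ∈ Set.Ico (c i.castSucc) (c i.succ),
      ∀ t' ∈ Set.Ico (c i.castSucc) (c i.succ), f t = f t')
    {N : ℕ} (t : Fin N → AddCircle (1 : ℝ)) :
    ∃ F : Finset (Fin N → β), F.card ≤ (d + 1) * N + 1 ∧
      ∀ x : AddCircle (1 : ℝ), (fun j => f (x + t j)) ∈ F := by
  classical
  choose τ hτ using fun j => QuotientAddGroup.mk_surjective (t j)
  set B : Finset ℝ := insert 0 (Finset.univ.image
    fun q : Fin (d + 1) × Fin N => Int.fract (c q.1.castSucc - τ q.2))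
  refine ⟨B.image fun (x : ℝ) j => f (x + t j), ?_, fun x => ?_⟩
  · calc _ ≤ B.card := Finset.card_image_le
      _ ≤ (d + 1) * N + 1 := by
        refine (Finset.card_insert_le _ _).trans (Nat.succ_le_succ ?_)
        simpa using Finset.card_image_le (s := Finset.univ)
          (f := fun q : Fin (d + 1) × Fin N => Int.fract (c q.1.castSucc - τ q.2))
  obtain ⟨x, rfl⟩ := QuotientAddGroup.mk_surjective x
  obtain ⟨v, hvB, ⟨hv₀, hvx⟩, hgap⟩ :=
    Finset.exists_mem_Icc_forall_mem_Ioc_notMem (Finset.mem_insert_self 0 _) (Int.fract_nonneg x)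
  refine Finset.mem_image.mpr ⟨v, hvB, funext fun j => ?_⟩
  have hx : ((x : ℝ) : AddCircle (1 : ℝ)) = (Int.fract x : ℝ) := (AddCircle.coe_fract x).symm
  rw [hx, ← hτ j]
  show f ((v + τ j : ℝ) : AddCircle (1 : ℝ)) = f ((Int.fract x + τ j : ℝ) : AddCircle (1 : ℝ))
  refine apply_coe_eq_of_forall_Ioc hc0 hc1 hf (by linarith) fun u hu i hui => ?_
  refine hgap (u - τ j) ⟨by linarith [hu.1], by linarith [hu.2]⟩ ?_
  refine Finset.mem_insert_of_mem (Finset.mem_image.mpr ⟨(i, j), Finset.mem_univ _, ?_⟩)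
  refine (AddCircle.eq_fract_of_coe_eq
    ⟨by linarith [hu.1], by linarith [hu.2, Int.fract_lt_one x]⟩ ?_).symm
  rw [AddCircle.coe_sub, AddCircle.coe_sub, hui]

end ArcColoring

theorem stmt14_general (d k : ℕ)
    -- the partition points `0 = c₀ < c₁ < ⋯ < c_d < c_{d+1} = 1`
    (c : Fin (d + 2) → ℝ)
    (hc0 : c 0 = 0) (hc1 : c (Fin.last (d + 1)) = 1)
    -- the coloring `f : 𝕋 → {0, …, d}` with `f t = i` exactly when `t ∈ [c_i, c_{i+1})`
    (f : AddCircle (1 : ℝ) → ℝ)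
    (hf : ∀ i : Fin (d + 1), ∀ t : ℝ, c i.castSucc ≤ t → t < c i.succ →
      f (t : AddCircle (1 : ℝ)) = (i : ℕ))
    (α : Fin k → AddCircle (1 : ℝ)) (z : AddCircle (1 : ℝ)) :
    -- the family of translates of the coding function `φ(n) = f(z + n₁α₁ + ⋯ + n_kα_k)`
    -- on `ℤ^k` contains no independent sequence
    ¬ ∃ s : ℕ → (Fin k → ℤ), IsIndependentSeq fun j (m : Fin k → ℤ) =>
        f (z + ∑ i, (m i + s j i) • α i) := by
  rintro ⟨s, hind⟩
  obtain ⟨N, hN⟩ := Nat.exists_mul_add_one_lt_two_pow (d + 1)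
  obtain ⟨F, hFcard, hF⟩ := exists_finset_forall_translate_mem hc0 hc1
    (fun i t ht t' ht' => (hf i t ht.1 ht.2).trans (hf i t' ht'.1 ht'.2).symm)
    (fun j : Fin N => z + ∑ i, s j i • α i)
  have hpow := hind.two_pow_le_card F fun m => by
    convert hF (∑ i, m i • α i) using 2 with j
    simp only [add_zsmul, Finset.sum_add_distrib]
    rw [add_left_comm]
  omega

theorem stmt14 (d k : ℕ)
    -- the partition points `0 = c₀ < c₁ < ⋯ < c_d < c_{d+1} = 1`
    (c : Fin (d + 2) → ℝ) (hmono : StrictMono c)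
    (hc0 : c 0 = 0) (hc1 : c (Fin.last (d + 1)) = 1)
    -- the coloring `f : 𝕋 → {0, …, d}` with `f t = i` exactly when `t ∈ [c_i, c_{i+1})`
    (f : AddCircle (1 : ℝ) → ℝ)
    (hf : ∀ i : Fin (d + 1), ∀ t : ℝ, c i.castSucc ≤ t → t < c i.succ →
      f (t : AddCircle (1 : ℝ)) = (i : ℕ))
    (α : Fin k → AddCircle (1 : ℝ)) (z : AddCircle (1 : ℝ)) :
    -- the family of translates of the coding function `φ(n) = f(z + n₁α₁ + ⋯ + n_kα_k)`
    -- on `ℤ^k` contains no independent sequence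
    ¬ ∃ s : ℕ → (Fin k → ℤ), IsIndependentSeq fun j (m : Fin k → ℤ) =>
        f (z + ∑ i, (m i + s j i) • α i) :=
  stmt14_general d k c hc0 hc1 f hf α z
end

section
/- Let G be a topological group acting continuously on compact metric spaces X and Y, and let π : X → Y be a continuous surjective G-equivariant map which is a strongly almost 1-1 extension, i.e. the set X ∖ X₀ is countable, where X₀ := {x ∈ X : π⁻¹({π(x)}) = {x}}. Assume that the G-system Y is tame, i.e. for every continuous f : Y → ℝ the family {y ↦ f(g·y) : g ∈ G} contains no independent sequence, and that for every p in the closure E(Y) of {y ↦ g·y : g ∈ G} in the product space Y^Y and every y ∈ Y the set p⁻¹({y}) is countable. Then the G-system X is tame: for every continuous f : X → ℝ the family {x ↦ f(g·x) : g ∈ G} contains no independent sequence. -/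
/-!
Tameness of `Y`, through Rosenthal's dichotomy (which we derive from Galvin's lemma on finite
subsets of `ℕ`), lets every sequence `gₙ` be thinned so that `gₙ • y` converges for every
`y ∈ Y`, say to `q y`; then `q ∈ E(Y)`. If `f (gₙ • ·)` were independent on `X` with constants
`a < b`, compactness would give for every `S ⊆ ℕ` a point `x S` with `f (gₙ • x S) ≤ a` for
`n ∈ S` and `≥ b` for `n ∉ S`. When `S` and its complement are infinite, cluster points of
`gₙ • x S` along `S` and along `Sᶜ` are two distinct points of the fibre of `π` over
`q (π (x S))`. Only countably many fibres of `π` are non-trivial, and all fibres of `π` and of `q`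
are countable, so the injective map `S ↦ x S` would send uncountably many `S` into a countable set.
-/

open Set Filter Topology

namespace Ramsey

def above (s : Finset ℕ) : Set ℕ := {m | ∀ x ∈ s, x < m}

@[simp] lemma above_empty : above ∅ = univ := by simp [above]

lemma above_insert (n : ℕ) (s : Finset ℕ) : above (insert n s) = Ioi n ∩ above s := by
  ext m; simp [above]

lemma _root_.Set.Infinite.inter_above {N : Set ℕ} (hN : N.Infinite) (s : Finset ℕ) :
    (N ∩ above s).Infinite := by
  have hfin : (above s)ᶜ.Finite :=
    (s.finite_toSet.biUnion fun x _ => finite_Iic x).subset fun m hm => by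
      simpa [above] using hm
  simpa [sdiff_compl] using hN.sdiff hfin

lemma _root_.StrictMono.exists_subset_image_range {a : ℕ → ℕ} (ha : StrictMono a)
    {s : Finset ℕ} (hs : ↑s ⊆ range a) :
    ∃ k, s ⊆ (Finset.range k).image a ∧ ∀ j, a j ∈ above s → k ≤ j := by
  induction s using Finset.induction_on_max with
  | empty => exact ⟨0, by simp, fun j _ => j.zero_le⟩
  | insert x s hxs ih =>
    obtain ⟨i, rfl⟩ := hs (Finset.mem_insert_self _ _)
    obtain ⟨k, hks, hk⟩ := ih ((Finset.coe_subset.2 (Finset.subset_insert _ _)).trans hs)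
    have hki : k ≤ i := hk i hxs
    refine ⟨i + 1, Finset.insert_subset (by simpa using ⟨i, le_rfl, rfl⟩) (hks.trans ?_),
      fun j hj => ?_⟩
    · exact Finset.image_subset_image (Finset.range_subset_range.2 (by omega))
    · exact ha.lt_iff_lt.1 (hj _ (Finset.mem_insert_self _ _))

theorem _root_.Set.Infinite.exists_fusion {P : Finset ℕ → Set ℕ → Prop}
    (hmono : ∀ s {L L'}, L' ⊆ L → P s L → P s L')
    (hdense : ∀ s {M}, M.Infinite → ∃ L ⊆ M, L.Infinite ∧ P s L)
    {M : Set ℕ} (hM : M.Infinite) :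
    ∃ N ⊆ M, N.Infinite ∧ ∀ s : Finset ℕ, ↑s ⊆ N → P s (N ∩ above s) := by
  have hdense' : ∀ (S : Finset (Finset ℕ)) {M : Set ℕ}, M.Infinite →
      ∃ L ⊆ M, L.Infinite ∧ ∀ s ∈ S, P s L := by
    intro S
    induction S using Finset.induction_on with
    | empty => exact fun hM => ⟨_, subset_rfl, hM, by simp⟩
    | insert s S _ ih =>
      intro M hM
      obtain ⟨L, hLM, hL, hLS⟩ := ih hM
      obtain ⟨L', hL'L, hL', hL's⟩ := hdense s hL
      exact ⟨L', hL'L.trans hLM, hL',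
        (Finset.forall_mem_insert _ _ _).2 ⟨hL's, fun t ht => hmono t hL'L (hLS t ht)⟩⟩
  have step : ∀ (c : Finset ℕ) (L : Set ℕ), L.Infinite →
      ∃ n ∈ L, ∃ L' ⊆ L ∩ Ioi n, L'.Infinite ∧ ∀ s ⊆ insert n c, P s L' := by
    intro c L hL
    obtain ⟨n, hn⟩ := hL.nonempty
    obtain ⟨L', hL'sub, hL', hP⟩ :=
      hdense' (insert n c).powerset (hL.sdiff (finite_Iic n))
    exact ⟨n, hn, L', fun m hm => ⟨(hL'sub hm).1, mem_Ioi.2 (not_le.1 (hL'sub hm).2)⟩, hL',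
      fun s hs => hP s (Finset.mem_powerset.2 hs)⟩
  choose! next hnext L' hL'sub hL' hL'P using step
  obtain ⟨M₀, hM₀M, hM₀, hP₀⟩ := hdense ∅ hM
  let st : ℕ → Finset ℕ × Set ℕ := fun k =>
    Nat.rec (∅, M₀) (fun _ p => (insert (next p.1 p.2) p.1, L' p.1 p.2)) k
  have hst : ∀ k, (st k).2.Infinite ∧ ∀ s ⊆ (st k).1, P s (st k).2 := by
    intro k
    induction k with
    | zero => exact ⟨hM₀, fun s hs => by rwa [Finset.subset_empty.1 hs]⟩
    | succ k ih => exact ⟨hL' _ _ ih.1, hL'P _ _ ih.1⟩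
  let a : ℕ → ℕ := fun k => next (st k).1 (st k).2
  have ha_mem : ∀ k, a k ∈ (st k).2 := fun k => hnext _ _ (hst k).1
  have hst_succ : ∀ k, (st (k + 1)).2 ⊆ (st k).2 ∩ Ioi (a k) := fun k => hL'sub _ _ (hst k).1
  have hst_anti : Antitone fun k => (st k).2 :=
    antitone_nat_of_succ_le fun k => (hst_succ k).trans inter_subset_left
  have ha : StrictMono a := strictMono_nat_of_lt_succ fun k => (hst_succ k (ha_mem (k + 1))).2
  have hst_fst : ∀ k, (st k).1 = (Finset.range k).image a := by
    intro k
    induction k with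
    | zero => rfl
    | succ k ih => rw [Finset.range_add_one, Finset.image_insert, ← ih]
  refine ⟨range a, ?_, infinite_range_of_injective ha.injective, fun s hs => ?_⟩
  · rintro _ ⟨k, rfl⟩
    exact hM₀M (hst_anti k.zero_le (ha_mem k))
  obtain ⟨k, hks, hk⟩ := ha.exists_subset_image_range hs
  refine hmono s ?_ ((hst k).2 s (hst_fst k ▸ hks))
  rintro _ ⟨⟨j, rfl⟩, hj⟩
  exact hst_anti (hk j hj) (ha_mem j)

variable (F : Finset ℕ → Prop)

def Accepts (s : Finset ℕ) (M : Set ℕ) : Prop :=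
  ∀ w : ℕ → ℕ, StrictMono w → range w ⊆ M → ∃ k, F (s ∪ (Finset.range k).image w)

def Rejects (s : Finset ℕ) (M : Set ℕ) : Prop :=
  ∀ L ⊆ M, L.Infinite → ¬ Accepts F s L

variable {F}

lemma Accepts.mono {s : Finset ℕ} {M M' : Set ℕ} (h : Accepts F s M) (hM : M' ⊆ M) :
    Accepts F s M' :=
  fun w hw hwM => h w hw (hwM.trans hM)

lemma Rejects.mono {s : Finset ℕ} {M M' : Set ℕ} (h : Rejects F s M) (hM : M' ⊆ M) :
    Rejects F s M' :=
  fun L hL => h L (hL.trans hM)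

lemma exists_subset_accepts_or_rejects (s : Finset ℕ) {M : Set ℕ} (hM : M.Infinite) :
    ∃ L ⊆ M, L.Infinite ∧ (Accepts F s L ∨ Rejects F s L) := by
  by_cases h : ∃ L ⊆ M, L.Infinite ∧ Accepts F s L
  · obtain ⟨L, hLM, hL, hacc⟩ := h
    exact ⟨L, hLM, hL, .inl hacc⟩
  · exact ⟨M, subset_rfl, hM, .inr fun L hLM hL hacc => h ⟨L, hLM, hL, hacc⟩⟩

lemma Rejects.finite_setOf_accepts_insert {s : Finset ℕ} {M : Set ℕ} (h : Rejects F s M) :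
    {n ∈ M | Accepts F (insert n s) (M ∩ Ioi n)}.Finite := by
  by_contra hB
  refine h _ (fun n hn => hn.1) hB fun w hw hwB => ?_
  have hw0 := (hwB (mem_range_self 0)).2
  obtain ⟨k, hk⟩ := hw0 (fun i => w (i + 1)) (hw.comp fun _ _ h => Nat.succ_lt_succ h)
    (range_subset_iff.2 fun i => ⟨(hwB (mem_range_self _)).1, hw i.succ_pos⟩)
  refine ⟨k + 1, ?_⟩
  rwa [Finset.range_add_one', Finset.image_insert, Finset.union_insert, ← Finset.insert_union,
    Finset.map_eq_image, Finset.image_image]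

theorem exists_subset_accepts_or_forall_not (F : Finset ℕ → Prop) {M : Set ℕ}
    (hM : M.Infinite) :
    ∃ N ⊆ M, N.Infinite ∧ (Accepts F ∅ N ∨ ∀ s : Finset ℕ, ↑s ⊆ N → ¬ F s) := by
  classical
  by_cases hacc : ∃ N ⊆ M, N.Infinite ∧ Accepts F ∅ N
  · obtain ⟨N, hNM, hN, h⟩ := hacc
    exact ⟨N, hNM, hN, .inl h⟩
  have hrej : Rejects F ∅ M := fun L hLM hL h => hacc ⟨L, hLM, hL, h⟩
  obtain ⟨N, hNM, hN, hdec⟩ := hM.exists_fusion (P := fun s L => Accepts F s L ∨ Rejects F s L)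
    (fun _ _ _ hL' h => h.imp (·.mono hL') (·.mono hL')) exists_subset_accepts_or_rejects
  -- Thinning `N` so that it avoids `Bad s` above each of its finite subsets `s` makes rejection
  -- pass from `s` to `insert n s`, hence to every finite subset.
  let Bad : Finset ℕ → Set ℕ := fun s =>
    if Rejects F s (N ∩ above s) then
      {n ∈ N ∩ above s | Accepts F (insert n s) (N ∩ above s ∩ Ioi n)}
    else ∅
  have hBad : ∀ s, (Bad s).Finite := by
    intro s
    by_cases hs : Rejects F s (N ∩ above s)
    · simpa only [Bad, if_pos hs] using hs.finite_setOf_accepts_insert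
    · simp only [Bad, if_neg hs, finite_empty]
  obtain ⟨N', hN'N, hN', hfree⟩ := hN.exists_fusion (P := fun s L => ∀ n ∈ L, n ∉ Bad s)
    (fun _ _ _ hL' h n hn => h n (hL' hn)) (fun s _ hM => ⟨_, sdiff_subset, hM.sdiff (hBad s),
      fun _ hn => hn.2⟩)
  have hrejN' : ∀ s : Finset ℕ, ↑s ⊆ N' → Rejects F s (N ∩ above s) := by
    intro s
    induction s using Finset.induction_on_max with
    | empty => exact fun _ => by simpa using hrej.mono hNM
    | insert n s hlt ih =>
      intro hs
      have hsN' : ↑s ⊆ N' := (Finset.coe_subset.2 (Finset.subset_insert _ _)).trans hs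
      have hn : n ∈ N' ∩ above s := ⟨hs (Finset.mem_insert_self _ _), hlt⟩
      have hnotBad := hfree s hsN' n hn
      simp only [Bad, if_pos (ih hsN'), inter_assoc, inter_comm (above s), ← above_insert]
        at hnotBad
      exact (hdec (insert n s) (hs.trans hN'N)).resolve_left fun hacc =>
        hnotBad ⟨⟨hN'N hn.1, hlt⟩, hacc⟩
  refine ⟨N', hN'N.trans hNM, hN', .inr fun s hs hF => ?_⟩
  exact hrejN' s hs _ subset_rfl (hN.inter_above s) fun w _ _ => ⟨0, by simpa using hF⟩

end Ramsey

lemma exists_strictMono_forall_mem {S : ℕ → Set ℕ} (hS : ∀ i, (S i).Infinite) :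
    ∃ w : ℕ → ℕ, StrictMono w ∧ ∀ i, w i ∈ S i := by
  choose next hnext_mem hnext_gt using fun i => (hS i).exists_gt
  let w : ℕ → ℕ := fun i => Nat.rec (next 0 0) (fun i wi => next (i + 1) wi) i
  refine ⟨w, strictMono_nat_of_lt_succ fun i => hnext_gt _ _, fun i => ?_⟩
  cases i <;> apply hnext_mem

namespace Rosenthal

open Finset in
def alternatingInter {Z : Type*} (A B : ℕ → Set Z) (t : Finset ℕ) : Set Z :=
  ⋂ n ∈ t, if Even #{m ∈ t | m < n} then A n else B n

def NotOscillating {Z : Type*} (A B : ℕ → Set Z) (L : Set ℕ) : Prop :=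
  ∀ z, {n ∈ L | z ∈ A n}.Finite ∨ {n ∈ L | z ∈ B n}.Finite

variable {Z : Type*} {A B : ℕ → Set Z}

lemma NotOscillating.mono {L L' : Set ℕ} (h : NotOscillating A B L) (hL : L' ⊆ L) :
    NotOscillating A B L' :=
  fun z => (h z).imp (·.subset fun _ hn => ⟨hL hn.1, hn.2⟩) (·.subset fun _ hn => ⟨hL hn.1, hn.2⟩)

open Finset in
lemma alternatingInter_image_range {v : ℕ → ℕ} (hv : StrictMono v) (k : ℕ) :
    alternatingInter A B ((Finset.range k).image v) =
      ⋂ i < k, if Even i then A (v i) else B (v i) := by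
  have hpos : ∀ i < k, #{m ∈ (Finset.range k).image v | m < v i} = i := by
    intro i hi
    rw [Finset.filter_image, Finset.card_image_of_injective _ hv.injective]
    convert Finset.card_range i using 2
    ext j
    simp only [Finset.mem_filter, Finset.mem_range, hv.lt_iff_lt]
    omega
  ext z
  simp only [alternatingInter, Finset.mem_image, Finset.mem_range, iInter_exists, mem_iInter]
  constructor
  · intro h i hi
    simpa [hpos i hi] using h _ i ⟨hi, rfl⟩
  · rintro h _ i ⟨hi, rfl⟩
    simpa [hpos i hi] using h i hi

theorem exists_independent_or_notOscillating (A B : ℕ → Set Z) {M : Set ℕ} (hM : M.Infinite) :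
    (∃ e : ℕ → ℕ, ∀ P Q : Finset ℕ, Disjoint P Q →
        ((⋂ n ∈ P, A (e n)) ∩ ⋂ n ∈ Q, B (e n)).Nonempty) ∨
      ∃ N ⊆ M, N.Infinite ∧ NotOscillating A B N := by
  obtain ⟨N, hNM, hN, hacc | havoid⟩ :=
    Ramsey.exists_subset_accepts_or_forall_not (fun t => alternatingInter A B t = ∅) hM
  · refine .inr ⟨N, hNM, hN, fun z => ?_⟩
    by_contra! h
    obtain ⟨w, hw, hwS⟩ := exists_strictMono_forall_mem
      (S := fun i => if Even i then {n ∈ N | z ∈ A n} else {n ∈ N | z ∈ B n})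
      fun i => by split_ifs; exacts [h.1, h.2]
    obtain ⟨k, hk⟩ := hacc w hw (range_subset_iff.2 fun i => by
      have := hwS i; split_ifs at this; exacts [this.1, this.1])
    rw [Finset.empty_union, alternatingInter_image_range hw] at hk
    refine (eq_empty_iff_forall_notMem.1 hk) z (mem_iInter₂.2 fun i _ => ?_)
    have := hwS i
    split_ifs at this ⊢; exacts [this.2, this.2]
  · refine .inl ⟨fun k => Nat.nth (· ∈ N) (3 * k + 1), fun P Q hPQ => ?_⟩
    -- `τ (2k + r) = 3k + r + [k ∉ Q]`: it places `3k + 1` at an even position iff `k ∉ Q`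
    let τ : ℕ → ℕ := fun i => 3 * (i / 2) + i % 2 + if i / 2 ∈ Q then 0 else 1
    have hτ : StrictMono τ := strictMono_nat_of_lt_succ fun i => by
      obtain ⟨k, rfl | rfl⟩ := Nat.even_or_odd' i
      · have h₁ : 2 * k / 2 = k := by omega
        have h₂ : (2 * k + 1) / 2 = k := by omega
        simp only [τ, h₁, h₂]; split_ifs <;> omega
      · have h₁ : (2 * k + 1) / 2 = k := by omega
        have h₂ : (2 * k + 1 + 1) / 2 = k + 1 := by omega
        simp only [τ, h₁, h₂]; split_ifs <;> omega
    have hη := Nat.nth_strictMono (p := (· ∈ N)) hN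
    let K := (P ∪ Q).sup id + 1
    have hK : ∀ k ∈ P ∪ Q, k < K := fun k hk => Nat.lt_succ_of_le (Finset.le_sup (f := id) hk)
    obtain ⟨z, hz⟩ := nonempty_iff_ne_empty.2 <| havoid ((Finset.range (2 * K)).image
      (Nat.nth (· ∈ N) ∘ τ)) fun _ hn => by
        obtain ⟨i, -, rfl⟩ := Finset.mem_image.1 hn
        exact Nat.nth_mem_of_infinite hN _
    rw [alternatingInter_image_range (hη.comp hτ), mem_iInter₂] at hz
    refine ⟨z, mem_iInter₂.2 fun k hk => ?_, mem_iInter₂.2 fun k hk => ?_⟩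
    · have hkQ : k ∉ Q := Finset.disjoint_left.1 hPQ hk
      have hk' := hK k (Finset.mem_union_left _ hk)
      simpa [τ, hkQ] using hz (2 * k) (by omega)
    · have hk' := hK k (Finset.mem_union_right _ hk)
      have h₁ : (2 * k + 1) / 2 = k := by omega
      simpa [τ, h₁, hk] using hz (2 * k + 1) (by omega)

lemma NotOscillating.not_frequently_nth {N : Set ℕ} (hN : N.Infinite) {s : Finset ℕ}
    (h : NotOscillating A B (N ∩ Ramsey.above s)) (z : Z) :
    ¬ ((∃ᶠ m in atTop, z ∈ A (Nat.nth (· ∈ N) m)) ∧ ∃ᶠ m in atTop, z ∈ B (Nat.nth (· ∈ N) m)) := by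
  have hη := Nat.nth_strictMono (p := (· ∈ N)) hN
  have habove : ∀ᶠ m in atTop, Nat.nth (· ∈ N) m ∈ Ramsey.above s :=
    hη.tendsto_atTop.eventually (eventually_all_finset s |>.2 fun x _ => eventually_gt_atTop x)
  have key : ∀ C : ℕ → Set Z, (∃ᶠ m in atTop, z ∈ C (Nat.nth (· ∈ N) m)) →
      {n ∈ N ∩ Ramsey.above s | z ∈ C n}.Infinite := by
    intro C hC
    refine ((Nat.frequently_atTop_iff_infinite.1 (hC.and_eventually habove)).image
      hη.injective.injOn).mono ?_
    rintro _ ⟨m, ⟨hm, hms⟩, rfl⟩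
    exact ⟨⟨Nat.nth_mem_of_infinite hN m, hms⟩, hm⟩
  rintro ⟨hA, hB⟩
  exact (h z).elim (key A hA) (key B hB)

end Rosenthal

lemma exists_tendsto_of_separating {ι α X : Type*} [TopologicalSpace X] [CompactSpace X]
    {φ : ι → X → ℝ} (hφ : ∀ i, Continuous (φ i)) (hsep : ∀ x y, x ≠ y → ∃ i, φ i x ≠ φ i y)
    {l : Filter α} [l.NeBot] {x : α → X}
    (hx : ∀ i (p q : ℚ), p < q →
      ¬ ((∃ᶠ n in l, φ i (x n) < p) ∧ ∃ᶠ n in l, q < φ i (x n))) :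
    ∃ y, Tendsto x l (𝓝 y) := by
  have hlt : ∀ y₁ y₂ i, MapClusterPt y₁ l x → MapClusterPt y₂ l x → ¬ φ i y₁ < φ i y₂ := by
    intro y₁ y₂ i h₁ h₂ hlt
    obtain ⟨p, hp₁, hp₂⟩ := exists_rat_btwn hlt
    obtain ⟨q, hq₁, hq₂⟩ := exists_rat_btwn hp₂
    exact hx i p q (by exact_mod_cast hq₁)
      ⟨h₁.frequently ((hφ i).continuousAt.eventually (eventually_lt_nhds hp₁)),
        h₂.frequently ((hφ i).continuousAt.eventually (eventually_gt_nhds hq₂))⟩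
  obtain ⟨y, -, hy⟩ := isCompact_univ.exists_mapClusterPt (f := l) (u := x) (by simp)
  refine ⟨y, tendsto_nhds_of_unique_mapClusterPt fun y' hy' => ?_⟩
  by_contra hne
  obtain ⟨i, hi⟩ := hsep _ _ hne
  rcases hi.lt_or_gt with h | h
  exacts [hlt _ _ i hy' hy h, hlt _ _ i hy hy' h]

lemma exists_dist_ne_of_denseRange {Y : Type*} [MetricSpace Y] {u : ℕ → Y} (hu : DenseRange u)
    {x y : Y} (hxy : x ≠ y) : ∃ i, dist x (u i) ≠ dist y (u i) := by
  by_contra! H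
  obtain ⟨i, hi⟩ := Metric.denseRange_iff.1 hu x (dist x y / 2) (by positivity [dist_pos.2 hxy])
  have := dist_triangle x (u i) y
  rw [dist_comm (u i), ← H i] at this
  linarith

theorem exists_strictMono_tendsto_of_forall_not_isIndependentSeq {Z Y : Type*} [MetricSpace Y]
    [CompactSpace Y] (h : ℕ → Z → Y)
    (hind : ∀ φ : Y → ℝ, Continuous φ → ∀ e : ℕ → ℕ,
      ¬ IsIndependentSeq fun n z => φ (h (e n) z)) :
    ∃ d : ℕ → ℕ, StrictMono d ∧ ∀ z, ∃ y, Tendsto (fun m => h (d m) z) atTop (𝓝 y) := by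
  rcases isEmpty_or_nonempty Y with hY | hY
  · exact ⟨id, strictMono_id, fun z => isEmptyElim (h 0 z)⟩
  obtain ⟨u, hu⟩ := TopologicalSpace.exists_dense_seq Y
  obtain ⟨σ, hσ⟩ := exists_surjective_nat (ℕ × ℚ × ℚ)
  let A : ℕ × ℚ × ℚ → ℕ → Set Z := fun c n => {z | dist (h n z) (u c.1) < c.2.1}
  let B : ℕ × ℚ × ℚ → ℕ → Set Z := fun c n => {z | c.2.2 < dist (h n z) (u c.1)}
  let Good : ℕ × ℚ × ℚ → Set ℕ → Prop := fun c L =>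
    c.2.1 < c.2.2 → Rosenthal.NotOscillating (A c) (B c) L
  have hGood : ∀ c {M : Set ℕ}, M.Infinite → ∃ L ⊆ M, L.Infinite ∧ Good c L := by
    intro c M hM
    by_cases hc : c.2.1 < c.2.2
    · rcases Rosenthal.exists_independent_or_notOscillating (A c) (B c) hM with
        ⟨e, he⟩ | ⟨L, hLM, hL, hLosc⟩
      · exact (hind _ (continuous_id.dist continuous_const) e
          ⟨c.2.1, c.2.2, by exact_mod_cast hc, he⟩).elim
      · exact ⟨L, hLM, hL, fun _ => hLosc⟩
    · exact ⟨M, subset_rfl, hM, fun h => absurd h hc⟩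
  obtain ⟨N, -, hN, hNgood⟩ := infinite_univ.exists_fusion (P := fun s L => Good (σ s.card) L)
    (fun _ _ _ hL' h hc => (h hc).mono hL') (fun s => hGood (σ s.card))
  refine ⟨Nat.nth (· ∈ N), Nat.nth_strictMono hN, fun z => exists_tendsto_of_separating
    (fun i => continuous_id.dist continuous_const) (fun _ _ => exists_dist_ne_of_denseRange hu) ?_⟩
  intro i p q hpq
  obtain ⟨k, hk⟩ := hσ (i, p, q)
  obtain ⟨s, hsN, rfl⟩ := hN.exists_subset_card_eq k
  have hgood := hNgood s hsN
  rw [hk] at hgood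
  exact (hgood hpq).not_frequently_nth hN z

lemma IsIndependentSeq.comp {Z : Type*} {f : ℕ → Z → ℝ} (hf : IsIndependentSeq f) {d : ℕ → ℕ}
    (hd : Function.Injective d) : IsIndependentSeq fun n => f (d n) := by
  obtain ⟨a, b, hab, h⟩ := hf
  refine ⟨a, b, hab, fun P M hPM => ?_⟩
  simpa using h (P.image d) (M.image d) ((Finset.disjoint_image hd).2 hPM)

lemma exists_injective_forall_le_and_ge {X : Type*} [TopologicalSpace X] [CompactSpace X]
    {h : ℕ → X → ℝ} (hh : ∀ n, Continuous (h n)) {a b : ℝ} (hab : a < b)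
    (hind : ∀ P M : Finset ℕ, Disjoint P M →
      ((⋂ n ∈ P, {x | h n x < a}) ∩ ⋂ n ∈ M, {x | b < h n x}).Nonempty) :
    ∃ x : Set ℕ → X, Function.Injective x ∧
      ∀ S, (∀ n ∈ S, h n (x S) ≤ a) ∧ ∀ n ∉ S, b ≤ h n (x S) := by
  classical
  have hx : ∀ S : Set ℕ, ∃ x, (∀ n ∈ S, h n x ≤ a) ∧ ∀ n ∉ S, b ≤ h n x := by
    intro S
    let C : ℕ → Set X := fun n => if n ∈ S then {x | h n x ≤ a} else {x | b ≤ h n x}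
    have hC : ∀ n, IsClosed (C n) := fun n => by
      by_cases hn : n ∈ S
      · simpa [C, hn] using isClosed_le (hh n) continuous_const
      · simpa [C, hn] using isClosed_le continuous_const (hh n)
    obtain ⟨x, -, hx⟩ := isCompact_univ.inter_iInter_nonempty C hC fun u => by
      obtain ⟨x, hxP, hxM⟩ :=
        hind _ _ (Finset.disjoint_filter_filter_not u u (· ∈ S))
      refine ⟨x, mem_univ x, mem_iInter₂.2 fun n hn => ?_⟩
      by_cases hnS : n ∈ S
      · simpa [C, hnS] using (mem_iInter₂.1 hxP n (by simp [hn, hnS])).le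
      · simpa [C, hnS] using (mem_iInter₂.1 hxM n (by simp [hn, hnS])).le
    refine ⟨x, fun n hn => ?_, fun n hn => ?_⟩
    · simpa [C, hn] using mem_iInter.1 hx n
    · simpa [C, hn] using mem_iInter.1 hx n
  choose x hxa hxb using hx
  have hsub : ∀ S T, x S = x T → S ⊆ T := fun S T hST n hS => by
    by_contra hT
    exact (hxb T n hT).not_gt (hST ▸ (hxa S n hS).trans_lt hab)
  exact ⟨x, fun S T hST => (hsub S T hST).antisymm (hsub T S hST.symm), fun S => ⟨hxa S, hxb S⟩⟩

lemma not_countable_setOf_infinite_and_infinite_compl :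
    ¬ {S : Set ℕ | S.Infinite ∧ Sᶜ.Infinite}.Countable := by
  intro h
  have hfin : {S : Set ℕ | S.Finite}.Countable := Countable.ofPred_finite
  have huniv : (univ : Set (Set ℕ)).Countable := by
    refine ((h.union hfin).union (hfin.image compl)).mono fun S _ => ?_
    by_cases hS : S.Finite
    · exact .inl (.inr hS)
    by_cases hSc : Sᶜ.Finite
    · exact .inr ⟨Sᶜ, hSc, compl_compl S⟩
    exact .inl (.inl ⟨hS, hSc⟩)
  have := countable_univ_iff.1 huniv
  obtain ⟨e, he⟩ := exists_surjective_nat (Set ℕ)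
  exact Function.cantor_surjective e he

lemma Set.Countable.preimage_of_preimage_singleton {α β : Type*} {f : α → β} {s : Set β}
    (hs : s.Countable) (hf : ∀ y ∈ s, (f ⁻¹' {y}).Countable) : (f ⁻¹' s).Countable := by
  rw [← biUnion_preimage_singleton]
  exact hs.biUnion hf

section Fibres

variable {X Y : Type*} {π : X → Y}

lemma countable_preimage_singleton (hstrong : {x : X | π ⁻¹' {π x} = {x}}ᶜ.Countable) (y : Y) :
    (π ⁻¹' {y}).Countable := by
  by_cases h : π ⁻¹' {y} ⊆ {x : X | π ⁻¹' {π x} = {x}}ᶜ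
  · exact hstrong.mono h
  · obtain ⟨x, rfl, hx⟩ := not_subset.1 h
    rw [notMem_compl_iff.1 hx]
    exact countable_singleton x

lemma countable_setOf_nontrivial_preimage (hstrong : {x : X | π ⁻¹' {π x} = {x}}ᶜ.Countable) :
    {y : Y | (π ⁻¹' {y}).Nontrivial}.Countable := by
  refine (hstrong.image π).mono ?_
  rintro y ⟨x, hx, x', hx', hne⟩
  refine ⟨x, fun h => hne ?_, hx⟩
  have : x' ∈ π ⁻¹' {π x} := hx'.trans hx.symm
  rw [h] at this
  exact this.symm

lemma exists_mem_eq_of_frequently_mem [TopologicalSpace X] [CompactSpace X] [TopologicalSpace Y]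
    [T2Space Y] (hπ : Continuous π) {K : Set X} (hK : IsClosed K) {ι : Type*} {l : Filter ι}
    {x : ι → X} {y : Y} (hy : Tendsto (π ∘ x) l (𝓝 y)) (hfreq : ∃ᶠ i in l, x i ∈ K) :
    ∃ u ∈ K, π u = y := by
  obtain ⟨u, huK, hu⟩ := hK.isCompact.exists_mapClusterPt_of_frequently hfreq
  exact ⟨u, huK, eq_of_nhds_neBot <|
    ((hu.tendsto_comp (hπ.tendsto u)).neBot.mono (inf_le_inf_left _ hy))⟩

end Fibres

theorem stmt16_general {G X Y : Type*} [Group G] [TopologicalSpace G]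
    [MetricSpace X] [CompactSpace X] [MetricSpace Y] [CompactSpace Y]
    [MulAction G X] [MulAction G Y] [ContinuousSMul G X]
    (π : X → Y) (hπcont : Continuous π)
    (hπequiv : ∀ (g : G) (x : X), π (g • x) = g • π x)
    -- `π` is a strongly almost 1-1 extension: `X ∖ X₀` is countable
    (hstrong : ({x : X | π ⁻¹' {π x} = {x}}ᶜ).Countable)
    -- the `G`-system `Y` is tame
    (hYtame : ∀ f : Y → ℝ, Continuous f →
      ¬ ∃ g : ℕ → G, IsIndependentSeq fun n (y : Y) => f (g n • y))
    -- every element of `E(Y)` has countable fibers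
    (hfib : ∀ p ∈ closure (Set.range fun g : G => fun y : Y => g • y),
      ∀ y : Y, (p ⁻¹' {y}).Countable) :
    -- then the `G`-system `X` is tame
    ∀ f : X → ℝ, Continuous f →
      ¬ ∃ g : ℕ → G, IsIndependentSeq fun n (x : X) => f (g n • x) := by
  rintro f hf ⟨g, hg⟩
  obtain ⟨d, hd, hconv⟩ := exists_strictMono_tendsto_of_forall_not_isIndependentSeq
    (fun n (y : Y) => g n • y) fun φ hφ e he => hYtame φ hφ ⟨g ∘ e, he⟩
  choose q hq using hconv
  have hqE : q ∈ closure (range fun g : G => fun y : Y => g • y) :=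
    mem_closure_of_tendsto (tendsto_pi_nhds.2 hq) (.of_forall fun m => mem_range_self _)
  obtain ⟨a, b, hab, hind⟩ := hg.comp hd.injective
  obtain ⟨x, hxinj, hx⟩ := exists_injective_forall_le_and_ge
    (fun n => hf.comp (continuous_const_smul (g (d n)))) hab hind
  have hnontriv : ∀ S : Set ℕ, S.Infinite → Sᶜ.Infinite → (π ⁻¹' {q (π (x S))}).Nontrivial := by
    intro S hS hSc
    have hlim : Tendsto (π ∘ fun n => g (d n) • x S) atTop (𝓝 (q (π (x S)))) := by
      simpa [Function.comp_def, hπequiv] using hq (π (x S))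
    obtain ⟨u, hu, hπu⟩ := exists_mem_eq_of_frequently_mem hπcont
      (isClosed_le hf continuous_const) hlim
      ((Nat.frequently_atTop_iff_infinite.2 hS).mono fun n hn => (hx S).1 n hn)
    obtain ⟨v, hv, hπv⟩ := exists_mem_eq_of_frequently_mem hπcont
      (isClosed_le continuous_const hf) hlim
      ((Nat.frequently_atTop_iff_infinite.2 hSc).mono fun n hn => (hx S).2 n hn)
    exact ⟨u, hπu, v, hπv, fun huv => (hu.trans_lt hab).not_ge (huv ▸ hv)⟩
  have hcount : (x ⁻¹' (π ⁻¹' (q ⁻¹' {y | (π ⁻¹' {y}).Nontrivial}))).Countable :=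
    (((countable_setOf_nontrivial_preimage hstrong).preimage_of_preimage_singleton
      fun y _ => hfib q hqE y).preimage_of_preimage_singleton
      fun y _ => countable_preimage_singleton hstrong y).preimage hxinj
  exact not_countable_setOf_infinite_and_infinite_compl
    (hcount.mono fun S hS => hnontriv S hS.1 hS.2)

theorem stmt16 {G X Y : Type*} [Group G] [TopologicalSpace G] [IsTopologicalGroup G]
    [MetricSpace X] [CompactSpace X] [MetricSpace Y] [CompactSpace Y]
    [MulAction G X] [MulAction G Y] [ContinuousSMul G X] [ContinuousSMul G Y]
    (π : X → Y) (hπcont : Continuous π) (hπsurj : Function.Surjective π)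
    (hπequiv : ∀ (g : G) (x : X), π (g • x) = g • π x)
    -- `π` is a strongly almost 1-1 extension: `X ∖ X₀` is countable
    (hstrong : ({x : X | π ⁻¹' {π x} = {x}}ᶜ).Countable)
    -- the `G`-system `Y` is tame
    (hYtame : ∀ f : Y → ℝ, Continuous f →
      ¬ ∃ g : ℕ → G, IsIndependentSeq fun n (y : Y) => f (g n • y))
    -- every element of `E(Y)` has countable fibers
    (hfib : ∀ p ∈ closure (Set.range fun g : G => fun y : Y => g • y),
      ∀ y : Y, (p ⁻¹' {y}).Countable) :
    -- then the `G`-system `X` is tame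
    ∀ f : X → ℝ, Continuous f →
      ¬ ∃ g : ℕ → G, IsIndependentSeq fun n (x : X) => f (g n • x) :=
  stmt16_general π hπcont hπequiv hstrong hYtame hfib
end

section
/- Let G be a topological group acting continuously on compact metric spaces X and Y, and let π : X → Y be a continuous G-equivariant map such that there exist countable subsets X₁ ⊆ X and Y₁ ⊆ Y for which π restricts to a bijection from X ∖ X₁ onto Y ∖ Y₁ (a strong almost 1-1 equivalence). Assume the G-system Y is equicontinuous, i.e. the family of translation maps {y ↦ g·y : g ∈ G} is equicontinuous. Then the G-system X is tame: for every continuous f : X → ℝ the family {x ↦ f(g·x) : g ∈ G} contains no independent sequence. -/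
open Filter Topology Set Function

theorem exists_strictMono_tendsto_of_equicontinuous {Y Z : Type*} [TopologicalSpace Y]
    [CompactSpace Y] [MetricSpace Z] [CompactSpace Z] {F : ℕ → Y → Z} (hF : Equicontinuous F) :
    ∃ (h : Y → Z) (φ : ℕ → ℕ), StrictMono φ ∧
      ∀ y, Tendsto (fun k => F (φ k) y) atTop (𝓝 (h y)) := by
  let T : ℕ → BoundedContinuousFunction Y Z := fun n => .mkOfCompact ⟨F n, hF.continuous n⟩
  have hT : Equicontinuous ((↑) : range T → Y → Z) := by
    have hcoe : ((↑) : range T → Y → Z) = F ∘ rangeSplitting T := by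
      funext i
      rw [comp_apply, ← congrArg DFunLike.coe (apply_rangeSplitting T i)]
      rfl
    exact hcoe ▸ hF.comp _
  obtain ⟨h, -, φ, hφ, hlim⟩ := (BoundedContinuousFunction.arzela_ascoli univ isCompact_univ _
    (fun _ _ _ => mem_univ _) hT).isSeqCompact fun n => subset_closure (mem_range_self n)
  exact ⟨h, φ, hφ, fun y => ((continuous_eval_const y).tendsto h).comp hlim⟩

theorem injective_of_tendsto_smul {G Y ι : Type*} [Group G] [MetricSpace Y] [MulAction G Y]
    (hG : UniformEquicontinuous fun g : G => fun y : Y => g • y) {l : Filter ι} [l.NeBot]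
    {u : ι → G} {h : Y → Y} (hu : ∀ y, Tendsto (fun i => u i • y) l (𝓝 (h y))) :
    Injective h := by
  intro y y' hyy'
  by_contra hne
  obtain ⟨δ, hδ, hδε⟩ := Metric.uniformEquicontinuous_iff.1 hG (dist y y') (dist_pos.2 hne)
  have hdist : Tendsto (fun i => dist (u i • y) (u i • y')) l (𝓝 0) := by
    simpa [hyy'] using (hu y).dist (hu y')
  obtain ⟨i, hi⟩ := (hdist.eventually (gt_mem_nhds hδ)).exists
  simpa using hδε _ _ hi (u i)⁻¹

theorem IsIndependentSeq.comp_injective {Z : Type*} {f : ℕ → Z → ℝ} (hf : IsIndependentSeq f)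
    {φ : ℕ → ℕ} (hφ : Injective φ) : IsIndependentSeq fun n => f (φ n) := by
  obtain ⟨a, b, hab, hind⟩ := hf
  refine ⟨a, b, hab, fun P M hPM => ?_⟩
  obtain ⟨z, hzP, hzM⟩ := hind (P.image φ) (M.image φ) ((Finset.disjoint_image hφ).2 hPM)
  simp only [Finset.mem_image, mem_iInter, mem_ofPred_eq, forall_exists_index, and_imp,
    forall_apply_eq_imp_iff₂] at hzP hzM
  exact ⟨z, mem_iInter₂.2 hzP, mem_iInter₂.2 hzM⟩

theorem IsIndependentSeq.exists_forall_le_or_ge {Z : Type*} [TopologicalSpace Z] [CompactSpace Z]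
    {f : ℕ → Z → ℝ} (hf : IsIndependentSeq f) (hc : ∀ n, Continuous (f n)) :
    ∃ a b, a < b ∧ ∀ s : Set ℕ, ∃ z, (∀ n ∈ s, f n z ≤ a) ∧ ∀ n ∉ s, b ≤ f n z := by
  classical
  obtain ⟨a, b, hab, hind⟩ := hf
  refine ⟨a, b, hab, fun s => ?_⟩
  let C : ℕ → Set Z := fun n => {z | (n ∈ s → f n z ≤ a) ∧ (n ∉ s → b ≤ f n z)}
  have hC : ∀ n, IsClosed (C n) := fun n => by
    by_cases hn : n ∈ s
    · simpa [C, hn] using isClosed_le (hc n) continuous_const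
    · simpa [C, hn] using isClosed_le continuous_const (hc n)
  obtain ⟨z, -, hz⟩ := isCompact_univ.inter_iInter_nonempty C hC fun u => by
    obtain ⟨z, hzP, hzM⟩ := hind _ _ (u.disjoint_filter_filter_not u (· ∈ s))
    simp only [Finset.mem_filter, mem_iInter, mem_ofPred_eq, and_imp] at hzP hzM
    exact ⟨z, mem_univ z, mem_iInter₂.2 fun n hn =>
      ⟨fun hns => (hzP n hn hns).le, fun hns => (hzM n hn hns).le⟩⟩
  exact ⟨z, fun n hn => (mem_iInter.1 hz n).1 hn, fun n hn => (mem_iInter.1 hz n).2 hn⟩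

theorem IsCompact.mem_image_of_frequently_mem {X Y ι : Type*} [TopologicalSpace X]
    [TopologicalSpace Y] [T2Space Y] {C : Set X} (hC : IsCompact C) {π : X → Y}
    (hπ : Continuous π) {l : Filter ι} {v : ι → X} {y : Y} (hv : ∃ᶠ i in l, v i ∈ C)
    (hy : Tendsto (π ∘ v) l (𝓝 y)) : y ∈ π '' C := by
  obtain ⟨z, hzC, hz⟩ := hC.exists_mapClusterPt_of_frequently hv
  exact ⟨z, hzC, eq_of_nhds_neBot ((hz.tendsto_comp (hπ.tendsto z)).clusterPt.mono hy)⟩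

theorem Set.InjOn.mem_image_of_ne {X Y : Type*} {π : X → Y} {s : Set X} (hπ : InjOn π sᶜ)
    {u v : X} (huv : u ≠ v) (he : π u = π v) : π u ∈ π '' s := by
  by_contra hu
  have hus : u ∉ s := fun h => hu ⟨u, h, rfl⟩
  have hvs : v ∉ s := fun h => hu ⟨v, h, he.symm⟩
  exact huv (hπ hus hvs he)

theorem Set.InjOn.countable_preimage {X Y : Type*} {π : X → Y} {s : Set X} (hπ : InjOn π sᶜ)
    (hs : s.Countable) {t : Set Y} (ht : t.Countable) : (π ⁻¹' t).Countable := by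
  have hrest : (sᶜ ∩ π ⁻¹' t).Countable :=
    (mapsTo_preimage π t).mono_left inter_subset_right |>.countable_of_injOn
      (hπ.mono inter_subset_left) ht
  exact (hs.union hrest).mono fun x hx => by by_cases h : x ∈ s <;> simp [h, hx]

theorem Set.InjOn.mem_image_of_frequently_le_of_frequently_ge {X Y ι : Type*}
    [TopologicalSpace X] [CompactSpace X] [TopologicalSpace Y] [T2Space Y] {π : X → Y}
    {s : Set X} (hinj : InjOn π sᶜ) (hπ : Continuous π) {f : X → ℝ} (hf : Continuous f)
    {a b : ℝ} (hab : a < b) {l : Filter ι} {v : ι → X} {y : Y} (hy : Tendsto (π ∘ v) l (𝓝 y))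
    (ha : ∃ᶠ i in l, f (v i) ≤ a) (hb : ∃ᶠ i in l, b ≤ f (v i)) : y ∈ π '' s := by
  obtain ⟨u, hua, rfl⟩ :=
    (isClosed_le hf continuous_const).isCompact.mem_image_of_frequently_mem hπ ha hy
  obtain ⟨w, hwb, hw⟩ :=
    (isClosed_le continuous_const hf).isCompact.mem_image_of_frequently_mem hπ hb hy
  exact hinj.mem_image_of_ne (by rintro rfl; exact (hab.trans_le hwb).not_ge hua) hw.symm

theorem not_countable_setOf_infinite_and_infinite_compl_s17 :
    ¬ {s : Set ℕ | s.Infinite ∧ sᶜ.Infinite}.Countable := by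
  intro hc
  have hfin : {s : Set ℕ | s.Finite}.Countable := Countable.ofPred_finite
  have hall : (univ : Set (Set ℕ)).Countable := by
    refine ((hfin.union (hfin.preimage compl_injective)).union hc).mono fun s _ => ?_
    by_cases hs : s.Finite
    · exact .inl (.inl hs)
    by_cases hs' : sᶜ.Finite
    · exact .inl (.inr hs')
    · exact .inr ⟨hs, hs'⟩
  exact Function.cantor_injective _ (countable_univ_iff.1 hall).exists_injective_nat.choose_spec

theorem stmt17_general {G X Y : Type*} [Group G] [TopologicalSpace G]
    [MetricSpace X] [CompactSpace X] [MetricSpace Y] [CompactSpace Y]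
    [MulAction G X] [MulAction G Y] [ContinuousSMul G X]
    (π : X → Y) (hπcont : Continuous π) (hπequiv : ∀ (g : G) (x : X), π (g • x) = g • π x)
    -- strong almost 1-1 equivalence: `π` restricts to a bijection `X ∖ X₁ → Y ∖ Y₁`
    -- with `X₁`, `Y₁` countable
    (hstrong : ∃ (X₁ : Set X) (Y₁ : Set Y), X₁.Countable ∧ Y₁.Countable ∧
      Set.BijOn π X₁ᶜ Y₁ᶜ)
    -- the `G`-system `Y` is equicontinuous
    (hequi : Equicontinuous fun g : G => fun y : Y => g • y) :
    -- then the `G`-system `X` is tame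
    ∀ f : X → ℝ, Continuous f →
      ¬ ∃ g : ℕ → G, IsIndependentSeq fun n (x : X) => f (g n • x) := by
  rintro f hf ⟨g, hind⟩
  obtain ⟨X₁, Y₁, hX₁, -, hbij⟩ := hstrong
  obtain ⟨h, φ, hφ, hlim⟩ := exists_strictMono_tendsto_of_equicontinuous (hequi.comp g)
  have hh : Injective h :=
    injective_of_tendsto_smul (CompactSpace.uniformEquicontinuous_of_equicontinuous hequi) hlim
  obtain ⟨a, b, hab, hx⟩ := (hind.comp_injective hφ.injective).exists_forall_le_or_ge
    fun n => hf.comp (continuous_const_smul _)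
  choose x hxa hxb using hx
  have hx_inj : Injective x := fun s t hst => by
    ext n
    by_cases hs : n ∈ s <;> by_cases ht : n ∈ t <;> simp only [hs, ht]
    · linarith [hxa s n hs, hst ▸ hxb t n ht]
    · linarith [hxb s n hs, hst ▸ hxa t n ht]
  have hbad : ∀ s : Set ℕ, s.Infinite → sᶜ.Infinite → h (π (x s)) ∈ π '' X₁ := fun s hs hs' =>
    hbij.injOn.mem_image_of_frequently_le_of_frequently_ge hπcont hf hab
      (by simpa [comp_def, hπequiv] using hlim (π (x s)))
      (((Nat.frequently_atTop_iff_infinite (p := (· ∈ s))).2 hs).mono (hxa s))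
      (((Nat.frequently_atTop_iff_infinite (p := (· ∉ s))).2 hs').mono (hxb s))
  refine not_countable_setOf_infinite_and_infinite_compl_s17 ?_
  refine ((hbij.injOn.countable_preimage hX₁ ((hX₁.image π).preimage hh)).preimage hx_inj).mono ?_
  exact fun s hs => hbad s hs.1 hs.2

theorem stmt17 {G X Y : Type*} [Group G] [TopologicalSpace G] [IsTopologicalGroup G]
    [MetricSpace X] [CompactSpace X] [MetricSpace Y] [CompactSpace Y]
    [MulAction G X] [MulAction G Y] [ContinuousSMul G X] [ContinuousSMul G Y]
    (π : X → Y) (hπcont : Continuous π) (hπequiv : ∀ (g : G) (x : X), π (g • x) = g • π x)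
    -- strong almost 1-1 equivalence: `π` restricts to a bijection `X ∖ X₁ → Y ∖ Y₁`
    -- with `X₁`, `Y₁` countable
    (hstrong : ∃ (X₁ : Set X) (Y₁ : Set Y), X₁.Countable ∧ Y₁.Countable ∧
      Set.BijOn π X₁ᶜ Y₁ᶜ)
    -- the `G`-system `Y` is equicontinuous
    (hequi : Equicontinuous fun g : G => fun y : Y => g • y) :
    -- then the `G`-system `X` is tame
    ∀ f : X → ℝ, Continuous f →
      ¬ ∃ g : ℕ → G, IsIndependentSeq fun n (x : X) => f (g n • x) :=
  stmt17_general π hπcont hπequiv hstrong hequi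
end

section
/- Let d ≥ 2 and let α = (α₁, …, α_d) ∈ ℝ^d be such that 1, α₁, …, α_d are linearly independent over ℚ. Then there exists a radius r > 0 such that every Euclidean sphere of radius r in ℝ^d contains only finitely many points of the set {n·α + m : n ∈ ℤ, m ∈ ℤ^d}; that is, for every y ∈ ℝ^d the set {(n, m) ∈ ℤ × ℤ^d : ‖n·α + m − y‖ = r} is finite, where ‖·‖ is the Euclidean norm on ℝ^d. -/
/-!
Only countably many radii are circumradii of simplices with vertices among the orbit points
`nα + m`, so some `r > 0` is none of them. The orbit points on a sphere of radius `r` then lie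
in a proper affine subspace `A`, and their differences in its direction `W`. Writing
`nα + m = T (n, -m)` for a linear surjection `T : ℝ^{1+d} → ℝ^d` with kernel `ℝ (1, α)`, the
integer vectors that `T` sends into `W` span a proper subspace of `ℝ^{1+d}`, hence lie in a
rational hyperplane. Rational independence of `1, α` says that this hyperplane meets `ker T`
only in `0`, so `T` is bounded below on it, and only finitely many integer vectors have image
of bounded norm.
-/

open Set Module

theorem exists_simplex_range_subset_of_affineSpan_eq_top {k V P : Type*} [DivisionRing k]
    [AddCommGroup V] [Module k V] [AddTorsor V P] [FiniteDimensional k V] {s : Set P}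
    (h : affineSpan k s = ⊤) : ∃ t : Affine.Simplex k P (finrank k V), range t.points ⊆ s := by
  obtain ⟨u, hus, b, hb⟩ := AffineBasis.exists_affine_subbasis h
  have : Fintype u := b.finite_set.fintype
  let e : Fin (finrank k V + 1) ≃ u := (Fintype.equivFinOfCardEq b.card_eq_finrank_add_one).symm
  refine ⟨⟨b ∘ e, b.ind.comp_embedding e.toEmbedding⟩, ?_⟩
  rintro _ ⟨i, rfl⟩
  simpa [hb] using hus (e i).2

theorem countable_setOf_circumradius {E : Type*} [NormedAddCommGroup E] [InnerProductSpace ℝ E]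
    {P : Set E} (hP : P.Countable) (n : ℕ) :
    {r | ∃ s : Affine.Simplex ℝ E n, range s.points ⊆ P ∧ s.circumradius = r}.Countable := by
  have := hP.to_subtype
  have : Countable {s : Affine.Simplex ℝ E n // range s.points ⊆ P} :=
    Function.Injective.countable (f := fun s i => (⟨s.1.points i, s.2 (mem_range_self i)⟩ : P))
      fun s t h => Subtype.ext (Affine.Simplex.ext fun i => congrArg Subtype.val (congrFun h i))
  refine (countable_range fun s : {s : Affine.Simplex ℝ E n // range s.points ⊆ P} =>
    s.1.circumradius).mono ?_
  rintro r ⟨s, hs, rfl⟩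
  exact ⟨⟨s, hs⟩, rfl⟩

theorem exists_rat_dotProduct_eq_zero {ι : Type*} [Fintype ι] {U : Submodule ℝ (ι → ℝ)}
    (hU : U ≠ ⊤) :
    ∃ c : ι → ℚ, c ≠ 0 ∧ ∀ q : ι → ℚ, (Rat.cast ∘ q : ι → ℝ) ∈ U → c ⬝ᵥ q = 0 := by
  classical
  set Φ := (Algebra.linearMap ℚ ℝ).compLeft ι
  have hlt : (U.restrictScalars ℚ).comap Φ < ⊤ := by
    refine lt_top_iff_ne_top.2 fun htop => hU (eq_top_iff.2 fun v _ => ?_)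
    rw [pi_eq_sum_univ v]
    refine U.sum_mem fun i _ => U.smul_mem _ ?_
    have : (Rat.cast ∘ fun j => if i = j then (1 : ℚ) else 0 : ι → ℝ) ∈ U :=
      htop.ge Submodule.mem_top
    simpa [Function.comp_def, apply_ite] using this
  obtain ⟨f, hf0, hf⟩ := Submodule.exists_le_ker_of_lt_top _ hlt
  refine ⟨(dotProductEquiv ℚ ι).symm f, by simpa using hf0, fun q hq => ?_⟩
  rw [← dotProductEquiv_apply_apply, LinearEquiv.apply_symm_apply]
  exact hf (show q ∈ (U.restrictScalars ℚ).comap Φ from hq)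

theorem LinearIndependent.ratCast_dotProduct_ne_zero {ι : Type*} [Fintype ι] {w : ι → ℝ}
    (hw : LinearIndependent ℚ w) {c : ι → ℚ} (hc : c ≠ 0) : (Rat.cast ∘ c) ⬝ᵥ w ≠ 0 := by
  refine fun h => hc (funext fun i => Fintype.linearIndependent_iff.1 hw c ?_ i)
  simpa [dotProduct, Rat.smul_def] using h

section Lattice

variable {ι : Type*} [Fintype ι] {F : Type*} [NormedAddCommGroup F] [NormedSpace ℝ F]

def LinearMap.HasTotallyIrrationalKer (T : (ι → ℝ) →ₗ[ℝ] F) : Prop :=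
  ∀ c : ι → ℚ, c ≠ 0 →
    Disjoint (LinearMap.ker T) (LinearMap.ker (dotProductBilin ℝ ℝ (Rat.cast ∘ c)))

theorem finite_setOf_norm_intCast_le (R : ℝ) :
    {q : ι → ℤ | ‖(Int.cast ∘ q : ι → ℝ)‖ ≤ R}.Finite := by
  refine (isCompact_closedBall (0 : ι → ℤ) R).finite_of_discrete.subset fun q hq => ?_
  rw [mem_closedBall_zero_iff]
  refine pi_norm_le_iff_of_nonneg ((norm_nonneg _).trans hq) |>.2 fun i => ?_
  rw [← Int.norm_cast_real]
  exact (norm_le_pi_norm (Int.cast ∘ q : ι → ℝ) i).trans hq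

theorem finite_setOf_mem_of_norm_le_of_disjoint (T : (ι → ℝ) →ₗ[ℝ] F)
    {V : Submodule ℝ (ι → ℝ)} (hV : Disjoint V (LinearMap.ker T)) (C : ℝ) :
    {q : ι → ℤ | (Int.cast ∘ q : ι → ℝ) ∈ V ∧ ‖T (Int.cast ∘ q)‖ ≤ C}.Finite := by
  obtain ⟨K, -, hK⟩ := (T.domRestrict V).injective_iff_antilipschitz.1
    (LinearMap.injective_domRestrict_iff.2 hV)
  refine (finite_setOf_norm_intCast_le (K * C)).subset fun q ⟨hqV, hqC⟩ => ?_
  calc ‖(Int.cast ∘ q : ι → ℝ)‖ = ‖(⟨_, hqV⟩ : V)‖ := rfl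
    _ ≤ K * ‖T.domRestrict V ⟨_, hqV⟩‖ := hK.le_mul_norm (map_zero _) _
    _ ≤ K * C := by gcongr; exact hqC

variable {T : (ι → ℝ) →ₗ[ℝ] F}

theorem finite_setOf_mem_submodule_of_norm_le (hT : T.HasTotallyIrrationalKer)
    {W : Submodule ℝ F} (hW : W.comap T ≠ ⊤) (C : ℝ) :
    {q : ι → ℤ | T (Int.cast ∘ q) ∈ W ∧ ‖T (Int.cast ∘ q)‖ ≤ C}.Finite := by
  obtain ⟨c, hc0, hc⟩ := exists_rat_dotProduct_eq_zero hW
  refine (finite_setOf_mem_of_norm_le_of_disjoint T (hT c hc0).symm C).subset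
    fun q ⟨hqW, hqC⟩ => ⟨?_, hqC⟩
  have := congrArg (Rat.cast : ℚ → ℝ) (hc (Int.cast ∘ q) (by simpa [Function.comp_def] using hqW))
  simpa [Function.comp_def, dotProduct] using this

theorem finite_setOf_mem_affineSubspace_of_dist_le (hTs : Function.Surjective T)
    (hT : T.HasTotallyIrrationalKer) {A : AffineSubspace ℝ F} (hA : A ≠ ⊤) (y : F) (R : ℝ) :
    {q : ι → ℤ | T (Int.cast ∘ q) ∈ A ∧ dist (T (Int.cast ∘ q)) y ≤ R}.Finite := by
  rcases eq_empty_or_nonempty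
    {q : ι → ℤ | T (Int.cast ∘ q) ∈ A ∧ dist (T (Int.cast ∘ q)) y ≤ R} with h | ⟨p, hpA, hpR⟩
  · simp [h]
  have hW : A.direction.comap T ≠ ⊤ := by
    intro htop
    refine hA ((AffineSubspace.direction_eq_top_iff_of_nonempty ⟨_, hpA⟩).1 ?_)
    refine eq_top_iff.2 fun w _ => ?_
    obtain ⟨v, rfl⟩ := hTs w
    exact htop.ge Submodule.mem_top
  refine ((finite_setOf_mem_submodule_of_norm_le hT hW (R + R)).image (· + p)).subset
    fun q ⟨hqA, hqR⟩ => ?_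
  have hcast : (Int.cast ∘ (q - p) : ι → ℝ) = Int.cast ∘ q - Int.cast ∘ p := by
    ext; simp
  refine ⟨q - p, ⟨?_, ?_⟩, sub_add_cancel q p⟩
  · rw [hcast, map_sub]
    exact A.vsub_mem_direction hqA hpA
  · rw [hcast, map_sub, ← dist_eq_norm]
    exact (dist_triangle_right _ _ y).trans (add_le_add hqR hpR)

end Lattice

theorem exists_pos_forall_finite_setOf_dist_eq {ι : Type*} [Fintype ι] {F : Type*}
    [NormedAddCommGroup F] [InnerProductSpace ℝ F] [FiniteDimensional ℝ F]
    {T : (ι → ℝ) →ₗ[ℝ] F} (hTs : Function.Surjective T) (hT : T.HasTotallyIrrationalKer) :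
    ∃ r > 0, ∀ y : F, {q : ι → ℤ | dist (T (Int.cast ∘ q)) y = r}.Finite := by
  set orbit : (ι → ℤ) → F := fun q => T (Int.cast ∘ q)
  obtain ⟨r, hr_pos, hr_bad⟩ := ((countable_setOf_circumradius (countable_range orbit)
    (finrank ℝ F)).dense_compl ℝ).inter_open_nonempty (Ioi 0) isOpen_Ioi nonempty_Ioi
  refine ⟨r, hr_pos, fun y => ?_⟩
  have hA : affineSpan ℝ (orbit '' {q | dist (orbit q) y = r}) ≠ ⊤ := by
    intro htop
    obtain ⟨s, hs⟩ := exists_simplex_range_subset_of_affineSpan_eq_top htop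
    refine hr_bad ⟨s, hs.trans (image_subset_range _ _), ?_⟩
    refine (s.eq_circumradius_of_dist_eq (s.span_eq_top rfl ▸ AffineSubspace.mem_top _ _ y)
      fun i => ?_).symm
    obtain ⟨q, hq, hqs⟩ := hs (mem_range_self i)
    rw [← hqs]
    exact hq
  exact (finite_setOf_mem_affineSubspace_of_dist_le hTs hT hA y r).subset
    fun q hq => ⟨subset_affineSpan _ _ (mem_image_of_mem _ hq), hq.le⟩

section Orbit

variable {d : ℕ}

/-- `orbitMap α (n, -m) = n • α + m`; the sign makes the kernel the line through `(1, α)`. -/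
noncomputable def orbitMap (α : Fin d → ℝ) : (Fin (d + 1) → ℝ) →ₗ[ℝ] EuclideanSpace ℝ (Fin d) :=
  (WithLp.linearEquiv 2 ℝ (Fin d → ℝ)).symm.toLinearMap ∘ₗ
    ((LinearMap.proj 0).smulRight α - LinearMap.funLeft ℝ ℝ Fin.succ)

theorem orbitMap_apply (α : Fin d → ℝ) (v : Fin (d + 1) → ℝ) (i : Fin d) :
    orbitMap α v i = v 0 * α i - v i.succ := by
  simp [orbitMap]

theorem orbitMap_surjective (α : Fin d → ℝ) : Function.Surjective (orbitMap α) :=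
  fun w => ⟨Fin.cons 0 (-w), by ext i; simp [orbitMap_apply]⟩

theorem ker_orbitMap_le (α : Fin d → ℝ) :
    LinearMap.ker (orbitMap α) ≤ ℝ ∙ Matrix.vecCons 1 α := by
  intro v hv
  rw [Submodule.mem_span_singleton]
  refine ⟨v 0, funext fun j => Fin.cases (by simp) (fun i => ?_) j⟩
  have := congrArg (· i) (LinearMap.mem_ker.1 hv)
  simp only [orbitMap_apply, PiLp.zero_apply] at this
  simp only [Pi.smul_apply, Matrix.cons_val_succ, smul_eq_mul]
  linarith

theorem hasTotallyIrrationalKer_orbitMap {α : Fin d → ℝ}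
    (hα : LinearIndependent ℚ (Matrix.vecCons (1 : ℝ) α)) :
    (orbitMap α).HasTotallyIrrationalKer := by
  refine fun c hc => Disjoint.mono_left (ker_orbitMap_le α) ?_
  rw [disjoint_comm, Submodule.disjoint_span_singleton' fun h => one_ne_zero (congrFun h 0)]
  simpa using hα.ratCast_dotProduct_ne_zero hc

end Orbit

theorem stmt18_general (d : ℕ) (α : Fin d → ℝ)
    -- `1, α₁, …, α_d` are linearly independent over `ℚ`
    (hindep : LinearIndependent ℚ (Matrix.vecCons (1 : ℝ) α)) :
    -- there is a radius `r > 0` such that every Euclidean sphere of radius `r` in `ℝ^d`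
    -- contains only finitely many points of `{n·α + m : n ∈ ℤ, m ∈ ℤ^d}`
    ∃ r : ℝ, 0 < r ∧ ∀ y : Fin d → ℝ,
      {p : ℤ × (Fin d → ℤ) |
        Real.sqrt (∑ i, ((p.1 : ℝ) * α i + (p.2 i : ℝ) - y i) ^ 2) = r}.Finite := by
  obtain ⟨r, hr, hfin⟩ := exists_pos_forall_finite_setOf_dist_eq (orbitMap_surjective α)
    (hasTotallyIrrationalKer_orbitMap hindep)
  refine ⟨r, hr, fun y => ?_⟩
  have hinj : Function.Injective
      fun p : ℤ × (Fin d → ℤ) => (Fin.cons p.1 (-p.2) : Fin (d + 1) → ℤ) := fun p p' h => by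
    obtain ⟨h1, h2⟩ := Fin.cons_injective2 h
    exact Prod.ext h1 (neg_injective h2)
  refine ((hfin (WithLp.toLp 2 y)).preimage hinj.injOn).subset fun p hp => ?_
  simp only [mem_preimage, mem_ofPred_eq, EuclideanSpace.dist_eq, orbitMap_apply, Real.dist_eq,
    sq_abs] at hp ⊢
  convert hp using 4 with i
  simp

theorem stmt18 (d : ℕ) (hd : 2 ≤ d) (α : Fin d → ℝ)
    -- `1, α₁, …, α_d` are linearly independent over `ℚ`
    (hindep : LinearIndependent ℚ (Matrix.vecCons (1 : ℝ) α)) :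
    -- there is a radius `r > 0` such that every Euclidean sphere of radius `r` in `ℝ^d`
    -- contains only finitely many points of `{n·α + m : n ∈ ℤ, m ∈ ℤ^d}`
    ∃ r : ℝ, 0 < r ∧ ∀ y : Fin d → ℝ,
      {p : ℤ × (Fin d → ℤ) |
        Real.sqrt (∑ i, ((p.1 : ℝ) * α i + (p.2 i : ℝ) - y i) ^ 2) = r}.Finite :=
  stmt18_general d α hindep
end

section
/- Let G be a topological group, K ⊆ G a compact subset and H ⊆ G a subgroup such that G = K·H = {k·h : k ∈ K, h ∈ H}, and assume H is Roelcke precompact in G in the sense that for every neighborhood U of the identity in G there exists a finite set F ⊆ H with H ⊆ U·F·U. Then G is Roelcke precompact: for every neighborhood U of the identity in G there exists a finite set F' ⊆ G with G ⊆ U·F'·U. -/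
open scoped Pointwise
open Set Topology

/-!
Cover `K` by finitely many right translates `U₀ t` of a small identity neighbourhood. Each left
translate `t H` is again Roelcke precompact, since conjugating by `t` moves a small identity
neighbourhood into `U₀`; so `U₀ t H ⊆ U F_t U`, and `K H` is covered by `U (⋃ F_t) U`.
-/

section

variable {G : Type*} [Group G] [TopologicalSpace G]

def IsRoelckePrecompact (S : Set G) : Prop :=
  ∀ U ∈ 𝓝 (1 : G), ∃ F : Set G, F.Finite ∧ S ⊆ U * F * U

namespace IsRoelckePrecompact

variable {S : Set G}

theorem singleton_mul [IsTopologicalGroup G] (hS : IsRoelckePrecompact S) (t : G) :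
    IsRoelckePrecompact ({t} * S) := by
  intro U hU
  set V : Set G := {t⁻¹} * U * {t}
  have hV : V ∈ 𝓝 (1 : G) := by
    simpa only [inv_mul_cancel] using
      mul_singleton_mem_nhds t (singleton_mul_mem_nhds_of_nhds_one t⁻¹ hU)
  have htV : {t} * V = U * {t} := by
    simp only [V, ← mul_assoc, singleton_mul_singleton, mul_inv_cancel, singleton_one, one_mul]
  obtain ⟨F, hF, hSF⟩ := hS (V ∩ U) (Filter.inter_mem hV hU)
  refine ⟨{t} * F, (finite_singleton t).mul hF, ?_⟩
  calc {t} * S ⊆ {t} * ((V ∩ U) * F * (V ∩ U)) := mul_subset_mul_left hSF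
    _ ⊆ {t} * (V * F * U) :=
        mul_subset_mul_left (mul_subset_mul (mul_subset_mul_right inter_subset_left)
          inter_subset_right)
    _ = U * ({t} * F) * U := by rw [← mul_assoc, ← mul_assoc, htV, mul_assoc U]

theorem nhds_mul_subset (hS : IsRoelckePrecompact S) {U₀ U : Set G}
    (hU₀ : U₀ ∈ 𝓝 (1 : G)) (hU₀U : U₀ * U₀ ⊆ U) : ∃ F : Set G, F.Finite ∧ U₀ * S ⊆ U * F * U := by
  have hU₀sub : U₀ ⊆ U := (subset_mul_right U₀ (mem_of_mem_nhds hU₀)).trans hU₀U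
  obtain ⟨F, hF, hSF⟩ := hS U₀ hU₀
  refine ⟨F, hF, ?_⟩
  calc U₀ * S ⊆ U₀ * (U₀ * F * U₀) := mul_subset_mul_left hSF
    _ = U₀ * U₀ * F * U₀ := by simp only [mul_assoc]
    _ ⊆ U * F * U := mul_subset_mul (mul_subset_mul_right hU₀U) hU₀sub

theorem isCompact_mul [IsTopologicalGroup G] {K : Set G} (hK : IsCompact K)
    (hS : IsRoelckePrecompact S) :
    IsRoelckePrecompact (K * S) := by
  intro U hU
  obtain ⟨U₀, hU₀open, hU₀one, hU₀U⟩ := exists_open_nhds_one_mul_subset hU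
  have hU₀ : U₀ ∈ 𝓝 (1 : G) := hU₀open.mem_nhds hU₀one
  obtain ⟨T, -, hKT⟩ :=
    hK.elim_nhds_subcover (U₀ * {·}) fun t _ => mul_singleton_mem_nhds_of_nhds_one t hU₀
  choose F hF hSF using fun t => (hS.singleton_mul t).nhds_mul_subset hU₀ hU₀U
  refine ⟨⋃ t ∈ T, F t, T.finite_toSet.biUnion fun t _ => hF t, ?_⟩
  calc K * S ⊆ (⋃ t ∈ T, U₀ * {t}) * S := mul_subset_mul_right hKT
    _ = ⋃ t ∈ T, U₀ * ({t} * S) := by simp only [iUnion_mul, mul_assoc]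
    _ ⊆ ⋃ t ∈ T, U * F t * U := iUnion₂_mono fun t _ => hSF t
    _ ⊆ U * (⋃ t ∈ T, F t) * U := iUnion₂_subset fun t ht =>
        mul_subset_mul_right (mul_subset_mul_left (subset_biUnion_of_mem (u := F) ht))

end IsRoelckePrecompact

end

theorem stmt19 {G : Type*} [Group G] [TopologicalSpace G] [IsTopologicalGroup G]
    (K : Set G) (hK : IsCompact K) (H : Subgroup G)
    -- `G = K·H`
    (hKH : K * (H : Set G) = Set.univ)
    -- `H` is Roelcke precompact in `G`: for every identity neighborhood `U` there is a
    -- finite `F ⊆ H` with `H ⊆ U·F·U`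
    (hH : ∀ U ∈ nhds (1 : G), ∃ F : Set G, F.Finite ∧ F ⊆ (H : Set G) ∧
      (H : Set G) ⊆ U * F * U) :
    -- then `G` is Roelcke precompact: for every identity neighborhood `U` there is a
    -- finite `F' ⊆ G` with `G ⊆ U·F'·U`
    ∀ U ∈ nhds (1 : G), ∃ F' : Set G, F'.Finite ∧ (Set.univ : Set G) ⊆ U * F' * U := by
  have hH' : IsRoelckePrecompact (H : Set G) := fun U hU =>
    (hH U hU).imp fun _ ⟨hF, _, hHF⟩ => ⟨hF, hHF⟩
  rw [← hKH]
  exact hH'.isCompact_mul hK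
end
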